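/- arXiv:2510.20404 — 3 statements merged into one kernel-verified Lean document; each statement's English description precedes it below -/
import Mathlib

section
/- (ATE identification under treatment-effect homogeneity in U) Assume binary A, consistency, latent ignorability, Z ⊥ U | L, positivity, and that Y(1) − Y(0) ⊥ U | L. Then for any bounded π(Z,L) with Cov(A, π(Z,L)|L) bounded away from 0: E[Y(1) − Y(0)] = E[ Cov(Y, π(Z,L)|L) / Cov(A, π(Z,L)|L) ]. -/
open MeasureTheory ProbabilityTheory

/-- The σ-algebra generated by a random variable. -/
abbrev mV {Ω β : Type*} [MeasurableSpace β] (X : Ω → β) : MeasurableSpace Ω :=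
  MeasurableSpace.comap X inferInstance

/-- Conditional covariance given a sub-σ-algebra `m`:
`Cov(X, Y | m) = E[XY | m] - E[X | m] * E[Y | m]`. -/
noncomputable def condCov {Ω : Type*} [MeasurableSpace Ω] (μ : Measure Ω)
    (m : MeasurableSpace Ω) (X Y : Ω → ℝ) : Ω → ℝ :=
  μ[X * Y | m] - μ[X | m] * μ[Y | m]

section Aux

open Set

variable {Ω : Type*} {m : MeasurableSpace Ω} [mΩ : MeasurableSpace Ω] [StandardBorelSpace Ω]
  {μ : Measure Ω} [IsProbabilityMeasure μ]

set_option linter.unusedSectionVars false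
set_option linter.unusedVariables false

omit [StandardBorelSpace Ω] in
lemma aux_comap_prod_eq {β1 γ : Type*} [Mβ1 : MeasurableSpace β1] [Mγ : MeasurableSpace γ]
    (f : Ω → β1) (g : Ω → γ) :
    MeasurableSpace.comap (fun x => (f x, g x)) inferInstance
      = Mβ1.comap f ⊔ Mγ.comap g := by
  rw [show (inferInstance : MeasurableSpace (β1 × γ))
      = Mβ1.comap Prod.fst ⊔ Mγ.comap Prod.snd from rfl,
    MeasurableSpace.comap_sup, MeasurableSpace.comap_comp, MeasurableSpace.comap_comp]
  rfl

lemma aux_dirac_freeze (hm : m ≤ mΩ) {W : Ω → ℝ}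
    (hW : Measurable W) (hWm : mV W ≤ m) :
    ∀ᵐ ω ∂μ, ∀ᵐ x ∂(condExpKernel μ m ω), W x = W ω := by
  have hsm : ∀ q : ℚ, MeasurableSet[m] (W ⁻¹' Iic (q : ℝ)) :=
    fun q => hWm _ ⟨Iic (q : ℝ), measurableSet_Iic, rfl⟩
  have hs : ∀ q : ℚ, MeasurableSet (W ⁻¹' Iic (q : ℝ)) := fun q => hm _ (hsm q)
  have h1 : ∀ q : ℚ, ∀ᵐ ω ∂μ,
      (condExpKernel μ m ω (W ⁻¹' Iic (q : ℝ))).toReal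
        = (W ⁻¹' Iic (q : ℝ)).indicator (fun _ => (1:ℝ)) ω := by
    intro q
    refine (condExpKernel_ae_eq_condExp hm (hs q)).trans ?_
    rw [condExp_of_stronglyMeasurable hm]
    · exact stronglyMeasurable_const.indicator (hsm q)
    · exact (integrable_const (1:ℝ)).indicator (hs q)
  rw [← ae_all_iff] at h1
  filter_upwards [h1] with ω hω
  have hκ : ∀ q : ℚ, (W ω ≤ q → condExpKernel μ m ω (W ⁻¹' Iic (q:ℝ)) = 1)
      ∧ (¬ (W ω ≤ (q:ℝ)) → condExpKernel μ m ω (W ⁻¹' Iic (q:ℝ)) = 0) := by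
    intro q
    have hfin : condExpKernel μ m ω (W ⁻¹' Iic (q:ℝ)) ≠ ⊤ := measure_ne_top _ _
    constructor
    · intro hle
      have : (condExpKernel μ m ω (W ⁻¹' Iic (q:ℝ))).toReal = 1 := by
        rw [hω q]; simp [indicator, hle]
      rw [← ENNReal.ofReal_toReal hfin, this]; simp
    · intro hlt
      have : (condExpKernel μ m ω (W ⁻¹' Iic (q:ℝ))).toReal = 0 := by
        rw [hω q]; simp [indicator, hlt]
      rw [← ENNReal.ofReal_toReal hfin, this]; simp
  have hnull : condExpKernel μ m ω {x | ¬ (W x = W ω)} = 0 := by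
    have hsub : {x | ¬ (W x = W ω)} ⊆
        ⋃ q : ℚ, (if W ω ≤ (q:ℝ) then (W ⁻¹' Iic (q:ℝ))ᶜ else W ⁻¹' Iic (q:ℝ)) := by
      intro x hx
      rcases lt_or_gt_of_ne hx with h | h
      · obtain ⟨q, hq1, hq2⟩ := exists_rat_btwn h
        refine mem_iUnion.2 ⟨q, ?_⟩
        rw [if_neg (not_le.2 hq2)]
        exact le_of_lt hq1
      · obtain ⟨q, hq1, hq2⟩ := exists_rat_btwn h
        refine mem_iUnion.2 ⟨q, ?_⟩
        rw [if_pos (le_of_lt hq1)]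
        exact fun hc => absurd (lt_of_le_of_lt hc hq2) (lt_irrefl _)
    refine measure_mono_null hsub (measure_iUnion_null fun q => ?_)
    by_cases h : W ω ≤ (q:ℝ)
    · rw [if_pos h]
      have h1 := (hκ q).1 h
      rw [measure_compl (hs q) (measure_ne_top _ _), h1]
      simp
    · rw [if_neg h]; exact (hκ q).2 h
  exact hnull

lemma aux_condIndepFun_ae_indepFun {β1 β2 : Type*} [Mβ1 : MeasurableSpace β1]
    [Mβ2 : MeasurableSpace β2] {S1 : Set (Set β1)} {S2 : Set (Set β2)}
    (hc1 : S1.Countable) (hc2 : S2.Countable)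
    (hp1 : IsPiSystem S1) (hp2 : IsPiSystem S2)
    (hg1 : Mβ1 = MeasurableSpace.generateFrom S1)
    (hg2 : Mβ2 = MeasurableSpace.generateFrom S2)
    (hm : m ≤ mΩ) {T1 : Ω → β1} {T2 : Ω → β2} (hT1 : Measurable T1) (hT2 : Measurable T2)
    (hind : CondIndepFun m hm T1 T2 μ) :
    ∀ᵐ ω ∂μ, IndepFun T1 T2 (condExpKernel μ m ω) := by
  have h : ∀ s ∈ S1, ∀ t ∈ S2, ∀ᵐ ω ∂μ,
      condExpKernel μ m ω (T1 ⁻¹' s ∩ T2 ⁻¹' t)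
        = condExpKernel μ m ω (T1 ⁻¹' s) * condExpKernel μ m ω (T2 ⁻¹' t) := by
    intro s hs t ht
    refine ae_of_ae_trim hm (hind (T1 ⁻¹' s) (T2 ⁻¹' t) ?_ ?_)
    · exact ⟨s, hg1 ▸ MeasurableSpace.measurableSet_generateFrom hs, rfl⟩
    · exact ⟨t, hg2 ▸ MeasurableSpace.measurableSet_generateFrom ht, rfl⟩
  have h' : ∀ᵐ ω ∂μ, ∀ s ∈ S1, ∀ t ∈ S2,
      condExpKernel μ m ω (T1 ⁻¹' s ∩ T2 ⁻¹' t)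
        = condExpKernel μ m ω (T1 ⁻¹' s) * condExpKernel μ m ω (T2 ⁻¹' t) :=
    (ae_ball_iff hc1).2 fun s hs => (ae_ball_iff hc2).2 fun t ht => h s hs t ht
  filter_upwards [h'] with ω hω
  have e1 : Mβ1.comap T1 = MeasurableSpace.generateFrom ((T1 ⁻¹' ·) '' S1) := by
    conv_lhs => rw [hg1]
    exact MeasurableSpace.comap_generateFrom
  have e2 : Mβ2.comap T2 = MeasurableSpace.generateFrom ((T2 ⁻¹' ·) '' S2) := by
    conv_lhs => rw [hg2]
    exact MeasurableSpace.comap_generateFrom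
  have hIS : IndepSets ((T1 ⁻¹' ·) '' S1) ((T2 ⁻¹' ·) '' S2) (condExpKernel μ m ω) := by
    rintro t1 t2 ⟨s, hs, rfl⟩ ⟨t, ht, rfl⟩
    rw [ae_dirac_eq]
    simpa [Kernel.const_apply] using hω s hs t ht
  have hII : Indep (Mβ1.comap T1) (Mβ2.comap T2) (condExpKernel μ m ω) :=
    IndepSets.indep (hT1.comap_le) hT2.comap_le (hp1.comap T1) (hp2.comap T2) e1 e2 hIS
  exact hII

lemma aux_real_generateFrom :
    (inferInstance : MeasurableSpace ℝ)
      = MeasurableSpace.generateFrom (⋃ a : ℚ, {Iic (a : ℝ)}) :=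
  (BorelSpace.measurable_eq).trans Real.borel_eq_generateFrom_Iic_rat

lemma aux_real_countable : (⋃ a : ℚ, {Iic (a : ℝ)}).Countable :=
  countable_iUnion fun _ => countable_singleton _

lemma aux_real_spanning : IsCountablySpanning (⋃ a : ℚ, {Iic (a : ℝ)}) := by
  refine ⟨fun n => Iic ((n : ℚ) : ℝ), fun n => mem_iUnion.2 ⟨n, rfl⟩, ?_⟩
  refine eq_univ_iff_forall.2 fun x => ?_
  obtain ⟨n, hn⟩ := exists_nat_ge x
  exact mem_iUnion.2 ⟨n, by push_cast; exact hn⟩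

lemma aux_ae_indepFun_R_R (hm : m ≤ mΩ) {T1 T2 : Ω → ℝ}
    (hT1 : Measurable T1) (hT2 : Measurable T2)
    (hind : CondIndepFun m hm T1 T2 μ) :
    ∀ᵐ ω ∂μ, IndepFun T1 T2 (condExpKernel μ m ω) :=
  aux_condIndepFun_ae_indepFun aux_real_countable aux_real_countable
    Real.isPiSystem_Iic_rat Real.isPiSystem_Iic_rat
    aux_real_generateFrom aux_real_generateFrom hm hT1 hT2 hind

lemma aux_prod_generateFrom :
    (inferInstance : MeasurableSpace (ℝ × ℝ))
      = MeasurableSpace.generateFrom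
        (image2 (· ×ˢ ·) (⋃ a : ℚ, {Iic (a : ℝ)}) (⋃ a : ℚ, {Iic (a : ℝ)})) :=
  (generateFrom_eq_prod aux_real_generateFrom.symm aux_real_generateFrom.symm
    aux_real_spanning aux_real_spanning).symm

lemma aux_ae_indepFun_R_RR (hm : m ≤ mΩ) {T1 : Ω → ℝ} {T2 : Ω → ℝ × ℝ}
    (hT1 : Measurable T1) (hT2 : Measurable T2)
    (hind : CondIndepFun m hm T1 T2 μ) :
    ∀ᵐ ω ∂μ, IndepFun T1 T2 (condExpKernel μ m ω) :=
  aux_condIndepFun_ae_indepFun aux_real_countable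
    (aux_real_countable.image2 aux_real_countable _)
    Real.isPiSystem_Iic_rat (Real.isPiSystem_Iic_rat.prod Real.isPiSystem_Iic_rat)
    aux_real_generateFrom aux_prod_generateFrom hm hT1 hT2 hind

lemma aux_condexp_mul_of_freeze {β1 β2 : Type*} [Mβ1 : MeasurableSpace β1]
    [Mβ2 : MeasurableSpace β2]
    (hm : m ≤ mΩ) {W : Ω → ℝ} (hW : Measurable W) (hWm : mV W ≤ m)
    {T1 : Ω → β1} {T2 : Ω → β2} (hT1 : Measurable T1) (hT2 : Measurable T2)
    (haeind : ∀ᵐ ω ∂μ, IndepFun T1 T2 (condExpKernel μ m ω))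
    {X F : Ω → ℝ}
    (hX : Measurable[Mβ1.comap T1 ⊔ mV W] X) (hF : Measurable[Mβ2.comap T2 ⊔ mV W] F)
    (hXi : Integrable X μ) (hFi : Integrable F μ)
    (hXFi : Integrable (fun ω => X ω * F ω) μ) :
    μ[fun ω => X ω * F ω | m] =ᵐ[μ] fun ω => (μ[X|m]) ω * (μ[F|m]) ω := by
  filter_upwards [haeind, aux_dirac_freeze hm hW hWm,
    Integrable.condExpKernel_ae (m := m) hXi, Integrable.condExpKernel_ae (m := m) hFi,
    Integrable.condExpKernel_ae (m := m) hXFi, condExp_ae_eq_integral_condExpKernel hm hXi,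
    condExp_ae_eq_integral_condExpKernel hm hFi,
    condExp_ae_eq_integral_condExpKernel hm hXFi]
    with ω hindω hWω hXint hFint hXFint hXeq hFeq hXFeq
  rw [hXFeq, hXeq, hFeq]
  have h1 : IndepFun (fun x => (T1 x, W x)) (fun x => (T2 x, W x)) (condExpKernel μ m ω) := by
    have h0 : IndepFun (fun x => (T1 x, W ω)) (fun x => (T2 x, W ω)) (condExpKernel μ m ω) :=
      hindω.comp (measurable_id.prodMk measurable_const)
        (measurable_id.prodMk measurable_const)
    exact h0.congr (hWω.mono fun x hx => by simp [hx]) (hWω.mono fun x hx => by simp [hx])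
  have h2 : Indep (Mβ1.comap T1 ⊔ mV W) (Mβ2.comap T2 ⊔ mV W) (condExpKernel μ m ω) := by
    have h1' : Indep (MeasurableSpace.comap (fun x => (T1 x, W x)) inferInstance)
        (MeasurableSpace.comap (fun x => (T2 x, W x)) inferInstance) (condExpKernel μ m ω) := h1
    rwa [aux_comap_prod_eq, aux_comap_prod_eq] at h1'
  have hIF : IndepFun X F (condExpKernel μ m ω) :=
    indep_of_indep_of_le_left (indep_of_indep_of_le_right h2 hF.comap_le) hX.comap_le
  simpa using hIF.integral_fun_mul_eq_mul_integral hXint.aestronglyMeasurable hFint.aestronglyMeasurable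

end Aux

set_option maxHeartbeats 1000000 in
/-- (ATE identification under treatment-effect homogeneity in `U`.)
With binary `A`, consistency, latent ignorability, `Z ⊥ U | L`, positivity, and
`Y(1) − Y(0) ⊥ U | L` (no unmeasured effect modification,
`E[Y(1)−Y(0)|U,L] = E[Y(1)−Y(0)|L]`), for any bounded `π(Z,L)` with `Cov(A,π|L)` bounded
away from `0`: `E[Y(1) − Y(0)] = E[Cov(Y,π(Z,L)|L)/Cov(A,π(Z,L)|L)]`. -/
theorem stmt10 {Ω : Type*} [mΩ : MeasurableSpace Ω] [StandardBorelSpace Ω]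
    (μ : Measure Ω) [IsProbabilityMeasure μ]
    (A Z U L Y0 Y1 : Ω → ℝ)
    (hA : Measurable A) (hZ : Measurable Z) (hU : Measurable U) (hL : Measurable L)
    (hY0 : Measurable Y0) (hY1 : Measurable Y1)
    (hA01 : ∀ ω, A ω = 0 ∨ A ω = 1)
    -- consistency
    (Y : Ω → ℝ) (hY : Y = fun ω => A ω * Y1 ω + (1 - A ω) * Y0 ω)
    -- latent ignorability: `Y(a) ⊥ (A,Z) | (U,L)` for `a = 0, 1`
    (hLI0 : CondIndepFun (mV U ⊔ mV L)
      (sup_le (measurable_iff_comap_le.mp hU) (measurable_iff_comap_le.mp hL))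
      Y0 (fun ω => (A ω, Z ω)) μ)
    (hLI1 : CondIndepFun (mV U ⊔ mV L)
      (sup_le (measurable_iff_comap_le.mp hU) (measurable_iff_comap_le.mp hL))
      Y1 (fun ω => (A ω, Z ω)) μ)
    -- IV independence: `Z ⊥ U | L`
    (hZU : CondIndepFun (mV L) (measurable_iff_comap_le.mp hL) Z U μ)
    -- positivity: `Var(P(A=1|Z,L) | L)` uniformly bounded below
    (hpos : ∃ ε' : ℝ, 0 < ε' ∧ ∀ᵐ ω ∂μ,
      ε' ≤ condCov μ (mV L) (μ[A | mV Z ⊔ mV L]) (μ[A | mV Z ⊔ mV L]) ω)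
    -- no unmeasured effect modification: `E[Y(1)−Y(0)|U,L] = E[Y(1)−Y(0)|L]`
    (hhom : μ[fun ω => Y1 ω - Y0 ω | mV U ⊔ mV L]
      =ᵐ[μ] μ[fun ω => Y1 ω - Y0 ω | mV L])
    -- `π` bounded with `Cov(A,π(Z,L)|L)` bounded away from zero
    (π : ℝ → ℝ → ℝ) (hπ : Measurable fun p : ℝ × ℝ => π p.1 p.2)
    (Cπ : ℝ) (hπbd : ∀ z l, |π z l| ≤ Cπ)
    (hcov : ∃ ε : ℝ, 0 < ε ∧ ∀ᵐ ω ∂μ,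
      ε ≤ |condCov μ (mV L) A (fun ω' => π (Z ω') (L ω')) ω|)
    -- integrability
    (hintY0 : Integrable Y0 μ) (hintY1 : Integrable Y1 μ)
    (hintratio : Integrable (fun ω =>
      condCov μ (mV L) Y (fun ω' => π (Z ω') (L ω')) ω /
        condCov μ (mV L) A (fun ω' => π (Z ω') (L ω')) ω) μ) :
    ∫ ω, (Y1 ω - Y0 ω) ∂μ
      = ∫ ω, condCov μ (mV L) Y (fun ω' => π (Z ω') (L ω')) ω /
            condCov μ (mV L) A (fun ω' => π (Z ω') (L ω')) ω ∂μ := by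
  have hm : mV L ≤ mΩ := measurable_iff_comap_le.mp hL
  have hm2 : (mV U ⊔ mV L : MeasurableSpace Ω) ≤ mΩ :=
    sup_le (measurable_iff_comap_le.mp hU) (measurable_iff_comap_le.mp hL)
  set P : Ω → ℝ := fun ω' => π (Z ω') (L ω') with hPdef
  have hPmeas : Measurable P := hπ.comp (hZ.prodMk hL)
  have hCπ0 : (0:ℝ) ≤ Cπ := le_trans (abs_nonneg _) (hπbd 0 0)
  have hPbd : ∀ ω, |P ω| ≤ Cπ := fun ω => hπbd _ _
  have hAbd : ∀ ω, |A ω| ≤ 1 := by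
    intro ω; rcases hA01 ω with h | h <;> rw [h] <;> norm_num
  have h1Abd : ∀ ω, |1 - A ω| ≤ 1 := by
    intro ω; rcases hA01 ω with h | h <;> rw [h] <;> norm_num
  -- integrability helpers
  have hbddInt : ∀ (g : Ω → ℝ), Measurable g → ∀ C : ℝ, (∀ ω, |g ω| ≤ C) → Integrable g μ := by
    intro g hg C hC
    exact (integrable_const C).mono' hg.aestronglyMeasurable
      (Filter.Eventually.of_forall fun ω => by
        rw [Real.norm_eq_abs]; exact hC ω)
  have hMulBdd : ∀ (f g : Ω → ℝ), Integrable f μ → AEStronglyMeasurable g μ →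
      ∀ C : ℝ, (∀ ω, |g ω| ≤ C) → Integrable (fun ω => f ω * g ω) μ := by
    intro f g hf hg C hC
    refine Integrable.mono' (hf.abs.const_mul C) (hf.aestronglyMeasurable.mul hg)
      (Filter.Eventually.of_forall fun ω => ?_)
    rw [Real.norm_eq_abs, abs_mul]
    calc |f ω| * |g ω| ≤ |f ω| * C :=
          mul_le_mul_of_nonneg_left (hC ω) (abs_nonneg _)
      _ = C * |f ω| := mul_comm _ _
  have hPint : Integrable P μ := hbddInt P hPmeas Cπ hPbd
  have hAint : Integrable A μ := hbddInt A hA 1 hAbd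
  have hAPmeas : Measurable (fun ω => A ω * P ω) := hA.mul hPmeas
  have hAPbd : ∀ ω, |A ω * P ω| ≤ Cπ := by
    intro ω; rw [abs_mul]
    calc |A ω| * |P ω| ≤ 1 * Cπ :=
          mul_le_mul (hAbd ω) (hPbd ω) (abs_nonneg _) zero_le_one
      _ = Cπ := one_mul _
  have hAPint : Integrable (fun ω => A ω * P ω) μ := hbddInt _ hAPmeas Cπ hAPbd
  have h1APmeas : Measurable (fun ω => (1 - A ω) * P ω) := (measurable_const.sub hA).mul hPmeas
  have h1APbd : ∀ ω, |(1 - A ω) * P ω| ≤ Cπ := by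
    intro ω; rw [abs_mul]
    calc |1 - A ω| * |P ω| ≤ 1 * Cπ :=
          mul_le_mul (h1Abd ω) (hPbd ω) (abs_nonneg _) zero_le_one
      _ = Cπ := one_mul _
  have h1APint : Integrable (fun ω => (1 - A ω) * P ω) μ := hbddInt _ h1APmeas Cπ h1APbd
  have h1Aint : Integrable (fun ω => 1 - A ω) μ := hbddInt _ (measurable_const.sub hA) 1 h1Abd
  have hY1APint : Integrable (fun ω => Y1 ω * (A ω * P ω)) μ :=
    hMulBdd _ _ hintY1 hAPmeas.aestronglyMeasurable Cπ hAPbd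
  have hY01APint : Integrable (fun ω => Y0 ω * ((1 - A ω) * P ω)) μ :=
    hMulBdd _ _ hintY0 h1APmeas.aestronglyMeasurable Cπ h1APbd
  have hY1Aint : Integrable (fun ω => Y1 ω * A ω) μ :=
    hMulBdd _ _ hintY1 hA.aestronglyMeasurable 1 hAbd
  have hY01Aint : Integrable (fun ω => Y0 ω * (1 - A ω)) μ :=
    hMulBdd _ _ hintY0 (measurable_const.sub hA).aestronglyMeasurable 1 h1Abd
  -- independence consequences at the kernel level
  have hAZmeas : Measurable (fun ω => (A ω, Z ω)) := hA.prodMk hZ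
  have haeind1 : ∀ᵐ ω ∂μ,
      IndepFun Y1 (fun ω' => (A ω', Z ω')) (condExpKernel μ (mV U ⊔ mV L) ω) :=
    aux_ae_indepFun_R_RR hm2 hY1 hAZmeas hLI1
  have haeind0 : ∀ᵐ ω ∂μ,
      IndepFun Y0 (fun ω' => (A ω', Z ω')) (condExpKernel μ (mV U ⊔ mV L) ω) :=
    aux_ae_indepFun_R_RR hm2 hY0 hAZmeas hLI0
  have haeindUZ : ∀ᵐ ω ∂μ, IndepFun U Z (condExpKernel μ (mV L) ω) :=
    aux_ae_indepFun_R_R hm hU hZ hZU.symm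
  -- measurability with respect to the freeze σ-algebras
  have hA2 : Measurable[MeasurableSpace.comap (fun ω => (A ω, Z ω)) inferInstance ⊔ mV L] A :=
    (measurable_fst.comp (comap_measurable _)).mono le_sup_left le_rfl
  have hZ2 : Measurable[MeasurableSpace.comap (fun ω => (A ω, Z ω)) inferInstance ⊔ mV L] Z :=
    (measurable_snd.comp (comap_measurable _)).mono le_sup_left le_rfl
  have hL2 : Measurable[MeasurableSpace.comap (fun ω => (A ω, Z ω)) inferInstance ⊔ mV L] L :=
    (comap_measurable _).mono le_sup_right le_rfl
  have hP2 : Measurable[MeasurableSpace.comap (fun ω => (A ω, Z ω)) inferInstance ⊔ mV L] P :=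
    hπ.comp (hZ2.prodMk hL2)
  have hselfY1 : Measurable[MeasurableSpace.comap Y1 inferInstance ⊔ mV L] Y1 :=
    (comap_measurable _).mono le_sup_left le_rfl
  have hselfY0 : Measurable[MeasurableSpace.comap Y0 inferInstance ⊔ mV L] Y0 :=
    (comap_measurable _).mono le_sup_left le_rfl
  -- m2-level freeze identities
  have e_i : μ[fun ω => Y1 ω * (A ω * P ω)|mV U ⊔ mV L] =ᵐ[μ]
      fun ω => (μ[Y1|mV U ⊔ mV L]) ω * (μ[fun ω' => A ω' * P ω'|mV U ⊔ mV L]) ω :=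
    aux_condexp_mul_of_freeze hm2 hL le_sup_right hY1 hAZmeas haeind1
      hselfY1 (hA2.mul hP2) hintY1 hAPint hY1APint
  have e_ii : μ[fun ω => Y0 ω * ((1 - A ω) * P ω)|mV U ⊔ mV L] =ᵐ[μ]
      fun ω => (μ[Y0|mV U ⊔ mV L]) ω * (μ[fun ω' => (1 - A ω') * P ω'|mV U ⊔ mV L]) ω :=
    aux_condexp_mul_of_freeze hm2 hL le_sup_right hY0 hAZmeas haeind0
      hselfY0 ((measurable_const.sub hA2).mul hP2) hintY0 h1APint hY01APint
  have e_iii : μ[fun ω => Y1 ω * A ω|mV U ⊔ mV L] =ᵐ[μ]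
      fun ω => (μ[Y1|mV U ⊔ mV L]) ω * (μ[A|mV U ⊔ mV L]) ω :=
    aux_condexp_mul_of_freeze hm2 hL le_sup_right hY1 hAZmeas haeind1
      hselfY1 hA2 hintY1 hAint hY1Aint
  have e_iv : μ[fun ω => Y0 ω * (1 - A ω)|mV U ⊔ mV L] =ᵐ[μ]
      fun ω => (μ[Y0|mV U ⊔ mV L]) ω * (μ[fun ω' => 1 - A ω'|mV U ⊔ mV L]) ω :=
    aux_condexp_mul_of_freeze hm2 hL le_sup_right hY0 hAZmeas haeind0
      hselfY0 (measurable_const.sub hA2) hintY0 h1Aint hY01Aint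
  -- m-level freeze identity
  have hE2Y0meas : Measurable[mV U ⊔ mV L] (μ[Y0|mV U ⊔ mV L]) :=
    stronglyMeasurable_condExp.measurable
  have hPm : Measurable[mV Z ⊔ mV L] P :=
    hπ.comp (((comap_measurable _).mono le_sup_left le_rfl).prodMk
      ((comap_measurable _).mono le_sup_right le_rfl))
  have hintE2Y0P : Integrable (fun ω => (μ[Y0|mV U ⊔ mV L]) ω * P ω) μ :=
    hMulBdd _ _ integrable_condExp hPmeas.aestronglyMeasurable Cπ hPbd
  have e_v : μ[fun ω => (μ[Y0|mV U ⊔ mV L]) ω * P ω|mV L] =ᵐ[μ]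
      fun ω => (μ[μ[Y0|mV U ⊔ mV L]|mV L]) ω * (μ[P|mV L]) ω :=
    aux_condexp_mul_of_freeze hm hL le_rfl hU hZ haeindUZ hE2Y0meas hPm
      integrable_condExp hPint hintE2Y0P
  -- a.e. bounds for conditional expectations
  have hE2APbd : ∀ᵐ ω ∂μ, |(μ[fun ω' => A ω' * P ω'|mV U ⊔ mV L]) ω| ≤ (Cπ.toNNReal : ℝ) :=
    ae_bdd_condExp_of_ae_bdd (Filter.Eventually.of_forall fun ω => by
      rw [Real.coe_toNNReal _ hCπ0]; exact hAPbd ω)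
  have hE2Abd : ∀ᵐ ω ∂μ, |(μ[A|mV U ⊔ mV L]) ω| ≤ ((1:ℝ).toNNReal : ℝ) :=
    ae_bdd_condExp_of_ae_bdd (Filter.Eventually.of_forall fun ω => by
      rw [Real.coe_toNNReal _ zero_le_one]; exact hAbd ω)
  have hE2Pbd : ∀ᵐ ω ∂μ, |(μ[P|mV U ⊔ mV L]) ω| ≤ (Cπ.toNNReal : ℝ) :=
    ae_bdd_condExp_of_ae_bdd (Filter.Eventually.of_forall fun ω => by
      rw [Real.coe_toNNReal _ hCπ0]; exact hPbd ω)
  have haesmE2 : ∀ (f : Ω → ℝ), AEStronglyMeasurable (μ[f|mV U ⊔ mV L]) μ :=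
    fun f => (stronglyMeasurable_condExp.mono hm2).aestronglyMeasurable
  have hintδE2AP : Integrable (fun ω => (μ[fun ω' => Y1 ω' - Y0 ω'|mV L]) ω *
      (μ[fun ω' => A ω' * P ω'|mV U ⊔ mV L]) ω) μ := by
    have h := Integrable.bdd_mul (c := (Cπ.toNNReal : ℝ))
      (integrable_condExp (m := mV L) (f := fun ω' => Y1 ω' - Y0 ω')) (haesmE2 _)
      (hE2APbd.mono fun ω h => by rwa [Real.norm_eq_abs])
    exact h.congr (Filter.Eventually.of_forall fun ω => mul_comm _ _)
  have hintδE2A : Integrable (fun ω => (μ[fun ω' => Y1 ω' - Y0 ω'|mV L]) ω *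
      (μ[A|mV U ⊔ mV L]) ω) μ := by
    have h := Integrable.bdd_mul (c := ((1:ℝ).toNNReal : ℝ))
      (integrable_condExp (m := mV L) (f := fun ω' => Y1 ω' - Y0 ω')) (haesmE2 _)
      (hE2Abd.mono fun ω h => by rwa [Real.norm_eq_abs])
    exact h.congr (Filter.Eventually.of_forall fun ω => mul_comm _ _)
  have hintE2Y0E2P : Integrable (fun ω => (μ[Y0|mV U ⊔ mV L]) ω * (μ[P|mV U ⊔ mV L]) ω) μ := by
    have h := Integrable.bdd_mul (c := (Cπ.toNNReal : ℝ))
      (integrable_condExp (m := mV U ⊔ mV L) (f := Y0)) (haesmE2 _)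
      (hE2Pbd.mono fun ω h => by rwa [Real.norm_eq_abs])
    exact h.congr (Filter.Eventually.of_forall fun ω => mul_comm _ _)
  -- E[Y1 - Y0 | U, L] in terms of separate condexps
  have hE2D : (fun ω => (μ[Y1|mV U ⊔ mV L]) ω - (μ[Y0|mV U ⊔ mV L]) ω) =ᵐ[μ]
      μ[fun ω => Y1 ω - Y0 ω|mV L] := by
    have hDfun : Y1 - Y0 = fun ω => Y1 ω - Y0 ω := rfl
    have h := condExp_sub (m := mV U ⊔ mV L) (μ := μ) hintY1 hintY0
    rw [hDfun] at h
    exact h.symm.trans hhom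
  -- conditional expectation of Y*P given (U, L)
  have hsplitYP : (fun ω => Y ω * P ω)
      = (fun ω => Y1 ω * (A ω * P ω)) + fun ω => Y0 ω * ((1 - A ω) * P ω) := by
    funext ω; simp only [Pi.add_apply, hY]; ring
  have e2YP : μ[fun ω => Y ω * P ω|mV U ⊔ mV L] =ᵐ[μ] fun ω =>
      (μ[fun ω => Y1 ω - Y0 ω|mV L]) ω * (μ[fun ω' => A ω' * P ω'|mV U ⊔ mV L]) ω
        + (μ[Y0|mV U ⊔ mV L]) ω * (μ[P|mV U ⊔ mV L]) ω := by
    rw [hsplitYP]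
    refine (condExp_add hY1APint hY01APint _).trans ?_
    have h1AP : μ[fun ω' => (1 - A ω') * P ω'|mV U ⊔ mV L] =ᵐ[μ]
        fun ω => (μ[P|mV U ⊔ mV L]) ω - (μ[fun ω' => A ω' * P ω'|mV U ⊔ mV L]) ω := by
      have hsp : (fun ω' => (1 - A ω') * P ω') = P - fun ω' => A ω' * P ω' := by
        funext ω; simp only [Pi.sub_apply]; ring
      rw [hsp]
      exact condExp_sub hPint hAPint _
    filter_upwards [e_i, e_ii, h1AP, hE2D] with ω h1 h2 h3 h4
    simp only [Pi.add_apply]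
    rw [h1, h2, h3, ← h4]
    ring
  -- conditional expectation of Y given (U, L)
  have hsplitY : Y = (fun ω => Y1 ω * A ω) + fun ω => Y0 ω * (1 - A ω) := by
    funext ω; simp only [Pi.add_apply, hY]; ring
  have e2Y : μ[Y|mV U ⊔ mV L] =ᵐ[μ] fun ω =>
      (μ[fun ω => Y1 ω - Y0 ω|mV L]) ω * (μ[A|mV U ⊔ mV L]) ω + (μ[Y0|mV U ⊔ mV L]) ω := by
    rw [hsplitY]
    refine (condExp_add hY1Aint hY01Aint _).trans ?_
    have h1A : μ[fun ω' => 1 - A ω'|mV U ⊔ mV L] =ᵐ[μ]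
        fun ω => 1 - (μ[A|mV U ⊔ mV L]) ω := by
      have hsp : (fun ω' => (1:ℝ) - A ω') = (fun _ => (1:ℝ)) - A := rfl
      rw [hsp]
      refine (condExp_sub (integrable_const 1) hAint _).trans ?_
      rw [condExp_const hm2 (1:ℝ)]
      exact Filter.Eventually.of_forall fun ω => rfl
    filter_upwards [e_iii, e_iv, h1A, hE2D] with ω h1 h2 h3 h4
    simp only [Pi.add_apply]
    rw [h1, h2, h3, ← h4]
    ring
  -- tower properties
  have htowAP : μ[μ[fun ω' => A ω' * P ω'|mV U ⊔ mV L]|mV L] =ᵐ[μ]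
      μ[fun ω' => A ω' * P ω'|mV L] := condExp_condExp_of_le le_sup_right hm2
  have htowA : μ[μ[A|mV U ⊔ mV L]|mV L] =ᵐ[μ] μ[A|mV L] :=
    condExp_condExp_of_le le_sup_right hm2
  have htowY0 : μ[μ[Y0|mV U ⊔ mV L]|mV L] =ᵐ[μ] μ[Y0|mV L] :=
    condExp_condExp_of_le le_sup_right hm2
  -- KEY1
  have KEY1 : μ[fun ω => Y ω * P ω|mV L] =ᵐ[μ] fun ω =>
      (μ[fun ω => Y1 ω - Y0 ω|mV L]) ω * (μ[fun ω' => A ω' * P ω'|mV L]) ω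
        + (μ[Y0|mV L]) ω * (μ[P|mV L]) ω := by
    refine ((condExp_condExp_of_le le_sup_right hm2).symm.trans
      ((condExp_congr_ae e2YP).trans ?_))
    have hre : (fun ω => (μ[fun ω => Y1 ω - Y0 ω|mV L]) ω
          * (μ[fun ω' => A ω' * P ω'|mV U ⊔ mV L]) ω
        + (μ[Y0|mV U ⊔ mV L]) ω * (μ[P|mV U ⊔ mV L]) ω)
        = (fun ω => (μ[fun ω => Y1 ω - Y0 ω|mV L]) ω
            * (μ[fun ω' => A ω' * P ω'|mV U ⊔ mV L]) ω)
          + fun ω => (μ[Y0|mV U ⊔ mV L]) ω * (μ[P|mV U ⊔ mV L]) ω := rfl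
    rw [hre]
    refine (condExp_add hintδE2AP hintE2Y0E2P _).trans ?_
    have hpull1 : μ[(fun ω => (μ[fun ω => Y1 ω - Y0 ω|mV L]) ω
          * (μ[fun ω' => A ω' * P ω'|mV U ⊔ mV L]) ω)|mV L] =ᵐ[μ]
        fun ω => (μ[fun ω => Y1 ω - Y0 ω|mV L]) ω
          * (μ[μ[fun ω' => A ω' * P ω'|mV U ⊔ mV L]|mV L]) ω :=
      condExp_mul_of_stronglyMeasurable_left stronglyMeasurable_condExp hintδE2AP integrable_condExp
    have hpull2 : (fun ω => (μ[Y0|mV U ⊔ mV L]) ω * (μ[P|mV U ⊔ mV L]) ω) =ᵐ[μ]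
        μ[fun ω => (μ[Y0|mV U ⊔ mV L]) ω * P ω|mV U ⊔ mV L] :=
      (condExp_mul_of_stronglyMeasurable_left stronglyMeasurable_condExp hintE2Y0P hPint).symm
    have step2 : μ[fun ω => (μ[Y0|mV U ⊔ mV L]) ω * (μ[P|mV U ⊔ mV L]) ω|mV L] =ᵐ[μ]
        fun ω => (μ[Y0|mV L]) ω * (μ[P|mV L]) ω := by
      refine (condExp_congr_ae hpull2).trans ?_
      refine (condExp_condExp_of_le le_sup_right hm2).trans ?_
      refine e_v.trans ?_
      filter_upwards [htowY0] with ω h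
      rw [h]
    filter_upwards [hpull1, htowAP, step2] with ω h1 h2 h3
    simp only [Pi.add_apply]
    rw [h1, h2, h3]
  -- KEY2
  have KEY2 : μ[Y|mV L] =ᵐ[μ] fun ω =>
      (μ[fun ω => Y1 ω - Y0 ω|mV L]) ω * (μ[A|mV L]) ω + (μ[Y0|mV L]) ω := by
    refine ((condExp_condExp_of_le le_sup_right hm2).symm.trans
      ((condExp_congr_ae e2Y).trans ?_))
    have hre : (fun ω => (μ[fun ω => Y1 ω - Y0 ω|mV L]) ω * (μ[A|mV U ⊔ mV L]) ω
        + (μ[Y0|mV U ⊔ mV L]) ω)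
        = (fun ω => (μ[fun ω => Y1 ω - Y0 ω|mV L]) ω * (μ[A|mV U ⊔ mV L]) ω)
          + μ[Y0|mV U ⊔ mV L] := rfl
    rw [hre]
    refine (condExp_add hintδE2A integrable_condExp _).trans ?_
    have hpull1 : μ[(fun ω => (μ[fun ω => Y1 ω - Y0 ω|mV L]) ω * (μ[A|mV U ⊔ mV L]) ω)|mV L]
        =ᵐ[μ] fun ω => (μ[fun ω => Y1 ω - Y0 ω|mV L]) ω * (μ[μ[A|mV U ⊔ mV L]|mV L]) ω :=
      condExp_mul_of_stronglyMeasurable_left stronglyMeasurable_condExp hintδE2A integrable_condExp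
    filter_upwards [hpull1, htowA, htowY0] with ω h1 h2 h3
    simp only [Pi.add_apply]
    rw [h1, h2, h3]
  -- the ratio equals E[Y1 - Y0 | L] a.e.
  obtain ⟨ε, hε, hcovae⟩ := hcov
  have hmain : (fun ω => condCov μ (mV L) Y P ω / condCov μ (mV L) A P ω) =ᵐ[μ]
      μ[fun ω => Y1 ω - Y0 ω|mV L] := by
    have hYPfun : Y * P = fun ω => Y ω * P ω := rfl
    have hAPfun : A * P = fun ω => A ω * P ω := rfl
    filter_upwards [KEY1, KEY2, hcovae] with ω k1 k2 hc
    have hcov_eq : condCov μ (mV L) A P ω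
        = (μ[fun ω' => A ω' * P ω'|mV L]) ω - (μ[A|mV L]) ω * (μ[P|mV L]) ω := by
      simp only [condCov, hAPfun, Pi.sub_apply, Pi.mul_apply]
    have hYcov : condCov μ (mV L) Y P ω
        = (μ[fun ω => Y ω * P ω|mV L]) ω - (μ[Y|mV L]) ω * (μ[P|mV L]) ω := by
      simp only [condCov, hYPfun, Pi.sub_apply, Pi.mul_apply]
    have hne : condCov μ (mV L) A P ω ≠ 0 := by
      intro h0; rw [h0, abs_zero] at hc; linarith
    have hfac : condCov μ (mV L) Y P ω
        = (μ[fun ω => Y1 ω - Y0 ω|mV L]) ω * condCov μ (mV L) A P ω := by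
      rw [hYcov, hcov_eq, k1, k2]; ring
    rw [hfac, mul_div_assoc, div_self hne, mul_one]
  calc ∫ ω, (Y1 ω - Y0 ω) ∂μ
      = ∫ ω, (μ[fun ω => Y1 ω - Y0 ω|mV L]) ω ∂μ := (integral_condExp hm).symm
    _ = ∫ ω, condCov μ (mV L) Y P ω / condCov μ (mV L) A P ω ∂μ :=
        (integral_congr_ae hmain).symm
end

section
/- (Mixed bias property, adaptive weight) Let π°(Z,L)=E[A|Z,L], δ°(L)=E[A|L], κ°(L)=Cov(A,π°(Z,L)|L), ξ°(Z,L)=E[Y|Z,L], η°(L)=E[Y|L], γ°(L)=Cov(Y,π°(Z,L)|L)/κ°(L), ψ° = E[γ°(L)]. For arbitrary nuisances (π,δ,κ,ξ,η,γ) with κ bounded away from zero, define φ(O) = κ(L)⁻¹(π(Z,L)−δ(L))Y − ψ° + γ(L)κ(L)⁻¹(κ(L) + (A−π(Z,L))² − (A−δ(L))²) + κ(L)⁻¹(ξ(Z,L)(A−π(Z,L)) − η(L)(A−δ(L))). Then E[φ(O)] = E[ κ(L)⁻¹ { (γ−γ°)(κ−κ°) − γ(δ°−δ)² + γ(π°−π)²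 − (ξ−ξ°)(π−π°) + (η−η°)(δ−δ°) } ] where all functions are evaluated at (Z,L) or L as appropriate. -/
open MeasureTheory ProbabilityTheory

section Tools

variable {Ω : Type*} {mΩ : MeasurableSpace Ω} {μ : Measure Ω} {m : MeasurableSpace Ω}
  {f g g' : Ω → ℝ}

/-- A function strongly measurable w.r.t. `m` and a.e. bounded. -/
def BddSM (μ : Measure Ω) (m : MeasurableSpace Ω) (f : Ω → ℝ) : Prop :=
  StronglyMeasurable[m] f ∧ ∃ C : ℝ, ∀ᵐ ω ∂μ, |f ω| ≤ C

namespace BddSM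

theorem of_meas (hf : Measurable[m] f) (C : ℝ) (h : ∀ ω, |f ω| ≤ C) : BddSM μ m f :=
  ⟨hf.stronglyMeasurable, C, Filter.Eventually.of_forall h⟩

theorem mono {m' : MeasurableSpace Ω} (hf : BddSM μ m f) (h : m ≤ m') : BddSM μ m' f :=
  ⟨hf.1.mono h, hf.2⟩

theorem mul (hf : BddSM μ m f) (hg : BddSM μ m g) : BddSM μ m (fun ω => f ω * g ω) := by
  obtain ⟨hfm, C, hC⟩ := hf
  obtain ⟨hgm, D, hD⟩ := hg
  refine ⟨hfm.mul hgm, C * D, ?_⟩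
  filter_upwards [hC, hD] with ω h1 h2
  rw [abs_mul]
  exact mul_le_mul h1 h2 (abs_nonneg _) ((abs_nonneg _).trans h1)

theorem add (hf : BddSM μ m f) (hg : BddSM μ m g) : BddSM μ m (fun ω => f ω + g ω) := by
  obtain ⟨hfm, C, hC⟩ := hf
  obtain ⟨hgm, D, hD⟩ := hg
  refine ⟨hfm.add hgm, C + D, ?_⟩
  filter_upwards [hC, hD] with ω h1 h2
  exact (abs_add_le _ _).trans (add_le_add h1 h2)

theorem neg (hf : BddSM μ m f) : BddSM μ m (fun ω => -f ω) := by
  obtain ⟨hfm, C, hC⟩ := hf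
  exact ⟨hfm.neg, C, by filter_upwards [hC] with ω h1; simpa using h1⟩

theorem sub (hf : BddSM μ m f) (hg : BddSM μ m g) : BddSM μ m (fun ω => f ω - g ω) := by
  have := hf.add hg.neg
  simpa [sub_eq_add_neg] using this

theorem const (c : ℝ) : BddSM μ m (fun _ => c) :=
  ⟨stronglyMeasurable_const, |c|, Filter.Eventually.of_forall fun _ => le_rfl⟩

theorem aesm (hm : m ≤ mΩ) (hf : BddSM μ m f) : AEStronglyMeasurable[mΩ] f μ :=
  (hf.1.mono hm).aestronglyMeasurable

theorem integrable [IsFiniteMeasure μ] (hm : m ≤ mΩ) (hf : BddSM μ m f) :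
    Integrable f μ := by
  obtain ⟨C, hC⟩ := hf.2
  exact Integrable.mono' (integrable_const C) (hf.aesm hm)
    (by simpa [Real.norm_eq_abs] using hC)

theorem integrable_mul (hm : m ≤ mΩ) (hf : BddSM μ m f) (hg : Integrable g μ) :
    Integrable (fun ω => f ω * g ω) μ := by
  obtain ⟨C, hC⟩ := hf.2
  exact hg.bdd_mul (hf.aesm hm) (by simpa [Real.norm_eq_abs] using hC)

theorem integral_mul_condexp (hm : m ≤ mΩ) [SigmaFinite (μ.trim hm)]
    (hf : BddSM μ m f) (hg : Integrable g μ) :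
    ∫ ω, f ω * g ω ∂μ = ∫ ω, f ω * (μ[g|m]) ω ∂μ := by
  have hfg : Integrable (f * g) μ := hf.integrable_mul hm hg
  calc ∫ ω, f ω * g ω ∂μ = ∫ ω, (f * g) ω ∂μ := rfl
    _ = ∫ ω, (μ[f * g|m]) ω ∂μ := (integral_condExp hm).symm
    _ = ∫ ω, (f * μ[g|m]) ω ∂μ :=
        integral_congr_ae (condExp_mul_of_stronglyMeasurable_left hf.1 hfg hg)
    _ = ∫ ω, f ω * (μ[g|m]) ω ∂μ := rfl

theorem integral_mul_eq (hm : m ≤ mΩ) [SigmaFinite (μ.trim hm)]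
    (hf : BddSM μ m f) (hg : Integrable g μ) (h : μ[g|m] =ᵐ[μ] g') :
    ∫ ω, f ω * g ω ∂μ = ∫ ω, f ω * g' ω ∂μ := by
  rw [hf.integral_mul_condexp hm hg]
  exact integral_congr_ae (by filter_upwards [h] with ω hω; rw [hω])

end BddSM

end Tools

/-- (Mixed bias property, adaptive weight.) With true nuisances
`π°(Z,L)=E[A|Z,L]`, `δ°(L)=E[A|L]`, `κ°(L)=Cov(A,π°(Z,L)|L)`, `ξ°(Z,L)=E[Y|Z,L]`,
`η°(L)=E[Y|L]`, `γ°(L)=Cov(Y,π°(Z,L)|L)/κ°(L)`, `ψ° = E[γ°(L)]`, and arbitrary nuisances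
`(π,δ,κ,ξ,η,γ)` with `κ` bounded away from zero, the influence function `φ` satisfies the
second-order mixed-bias identity. -/
theorem stmt15 {Ω : Type*} [mΩ : MeasurableSpace Ω]
    (μ : Measure Ω) [IsProbabilityMeasure μ]
    (A Y Z L : Ω → ℝ)
    (hA : Measurable A) (hY : Measurable Y) (hZ : Measurable Z) (hL : Measurable L)
    (hA01 : ∀ ω, A ω = 0 ∨ A ω = 1)
    -- true nuisances
    (π0 δ0 κ0 ξ0 η0 γ0 : Ω → ℝ) (ψ0 : ℝ)
    (hπ0 : π0 = μ[A | mV Z ⊔ mV L]) (hδ0 : δ0 = μ[A | mV L])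
    (hκ0 : κ0 = condCov μ (mV L) A π0)
    (hξ0 : ξ0 = μ[Y | mV Z ⊔ mV L]) (hη0 : η0 = μ[Y | mV L])
    (hγ0 : γ0 = fun ω => condCov μ (mV L) Y π0 ω / κ0 ω)
    (hψ0 : ψ0 = ∫ ω, γ0 ω ∂μ)
    (hRWF : ∃ ε : ℝ, 0 < ε ∧ ∀ᵐ ω ∂μ, ε ≤ |κ0 ω|)
    -- arbitrary nuisances: `π, ξ` functions of `(Z,L)`; `δ, κ, η, γ` functions of `L`
    (πn ξn δ κ η γ : Ω → ℝ)
    (hπnm : Measurable[mV Z ⊔ mV L] πn) (hξnm : Measurable[mV Z ⊔ mV L] ξn)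
    (hδm : Measurable[mV L] δ) (hκm : Measurable[mV L] κ)
    (hηm : Measurable[mV L] η) (hγm : Measurable[mV L] γ)
    (Cn : ℝ) (hbdd : ∀ ω, |πn ω| ≤ Cn ∧ |ξn ω| ≤ Cn ∧ |δ ω| ≤ Cn ∧ |κ ω| ≤ Cn ∧
      |η ω| ≤ Cn ∧ |γ ω| ≤ Cn)
    (hκaway : ∃ ε : ℝ, 0 < ε ∧ ∀ ω, ε ≤ |κ ω|)
    -- the influence function with nuisances plugged in
    (φ : Ω → ℝ)
    (hφ : φ = fun ω =>
      (κ ω)⁻¹ * (πn ω - δ ω) * Y ω - ψ0 +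
        γ ω * (κ ω)⁻¹ * (κ ω + (A ω - πn ω) ^ 2 - (A ω - δ ω) ^ 2) +
        (κ ω)⁻¹ * (ξn ω * (A ω - πn ω) - η ω * (A ω - δ ω)))
    -- integrability
    (hintY : Integrable Y μ)
    (hintγ0 : Integrable γ0 μ)
    (hintφ : Integrable φ μ)
    (hintbias : Integrable (fun ω =>
      (κ ω)⁻¹ * ((γ ω - γ0 ω) * (κ ω - κ0 ω) - γ ω * (δ0 ω - δ ω) ^ 2 +
        γ ω * (π0 ω - πn ω) ^ 2 - (ξn ω - ξ0 ω) * (πn ω - π0 ω) +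
        (η ω - η0 ω) * (δ ω - δ0 ω)) ) μ) :
    ∫ ω, φ ω ∂μ
      = ∫ ω, (κ ω)⁻¹ * ((γ ω - γ0 ω) * (κ ω - κ0 ω) - γ ω * (δ0 ω - δ ω) ^ 2 +
            γ ω * (π0 ω - πn ω) ^ 2 - (ξn ω - ξ0 ω) * (πn ω - π0 ω) +
            (η ω - η0 ω) * (δ ω - δ0 ω)) ∂μ := by
  obtain ⟨ε, hε, hκε⟩ := hκaway
  have hm1 : mV L ≤ mΩ := hL.comap_le
  have hm2 : (mV Z ⊔ mV L) ≤ mΩ := sup_le hZ.comap_le hL.comap_le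
  have hm12 : mV L ≤ mV Z ⊔ mV L := le_sup_right
  have hκne : ∀ ω, κ ω ≠ 0 := by
    intro ω h0
    have := hκε ω
    rw [h0] at this; simp at this; linarith
  -- bounded strongly measurable pieces
  have kinB : BddSM μ (mV L) (fun ω => (κ ω)⁻¹) :=
    BddSM.of_meas hκm.inv ε⁻¹ (fun ω => by
      rw [abs_inv]
      exact inv_anti₀ hε (hκε ω))
  have γB : BddSM μ (mV L) γ := BddSM.of_meas hγm Cn fun ω => (hbdd ω).2.2.2.2.2
  have δB : BddSM μ (mV L) δ := BddSM.of_meas hδm Cn fun ω => (hbdd ω).2.2.1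
  have ηB : BddSM μ (mV L) η := BddSM.of_meas hηm Cn fun ω => (hbdd ω).2.2.2.2.1
  have πnB : BddSM μ (mV Z ⊔ mV L) πn := BddSM.of_meas hπnm Cn fun ω => (hbdd ω).1
  have ξnB : BddSM μ (mV Z ⊔ mV L) ξn := BddSM.of_meas hξnm Cn fun ω => (hbdd ω).2.1
  have AB : BddSM μ mΩ A :=
    BddSM.of_meas hA 1 (fun ω => by rcases hA01 ω with h | h <;> simp [h])
  have Aint : Integrable A μ := AB.integrable le_rfl
  have hA1ae : ∀ᵐ ω ∂μ, |A ω| ≤ ((1 : NNReal) : ℝ) :=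
    Filter.Eventually.of_forall fun ω => by rcases hA01 ω with h | h <;> simp [h]
  have hπ0ae : ∀ᵐ ω ∂μ, |π0 ω| ≤ ((1 : NNReal) : ℝ) := by
    rw [hπ0]; exact ae_bdd_condExp_of_ae_bdd hA1ae
  have π0B : BddSM μ (mV Z ⊔ mV L) π0 :=
    ⟨hπ0 ▸ stronglyMeasurable_condExp, ((1 : NNReal) : ℝ), hπ0ae⟩
  have δ0B : BddSM μ (mV L) δ0 :=
    ⟨hδ0 ▸ stronglyMeasurable_condExp, ((1 : NNReal) : ℝ), by
      rw [hδ0]; exact ae_bdd_condExp_of_ae_bdd hA1ae⟩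
  have π0int : Integrable π0 μ := (π0B.mono hm2).integrable le_rfl
  have ξ0int : Integrable ξ0 μ := by rw [hξ0]; exact integrable_condExp
  have η0int : Integrable η0 μ := by rw [hη0]; exact integrable_condExp
  have Aπ0int : Integrable (A * π0) μ := (AB.mul (π0B.mono hm2)).integrable le_rfl
  have Yπ0int : Integrable (Y * π0) μ :=
    (((π0B.mono hm2).integrable_mul le_rfl hintY).congr
      (Filter.Eventually.of_forall fun ω => mul_comm _ _))
  have PB : BddSM μ (mV L) (μ[A * π0|mV L]) := by
    refine ⟨stronglyMeasurable_condExp, ((1 : NNReal) : ℝ), ae_bdd_condExp_of_ae_bdd ?_⟩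
    filter_upwards [hπ0ae] with ω h1
    simp only [Pi.mul_apply]
    rw [abs_mul]
    rcases hA01 ω with h | h <;> rw [h] <;> simpa using h1
  have Qint : Integrable (μ[Y * π0|mV L]) μ := integrable_condExp
  have tπ : μ[π0|mV L] =ᵐ[μ] δ0 := by
    rw [hπ0, hδ0]; exact condExp_condExp_of_le hm12 hm2
  have tξ : μ[ξ0|mV L] =ᵐ[μ] η0 := by
    rw [hξ0, hη0]; exact condExp_condExp_of_le hm12 hm2
  have tA : μ[A|mV Z ⊔ mV L] =ᵐ[μ] π0 := by rw [hπ0]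
  have tY : μ[Y|mV Z ⊔ mV L] =ᵐ[μ] ξ0 := by rw [hξ0]
  have hκ0ae : κ0 =ᵐ[μ] fun ω => (μ[A * π0|mV L]) ω - δ0 ω * δ0 ω := by
    filter_upwards [tπ] with ω h1
    rw [hκ0]
    simp only [condCov, Pi.sub_apply, Pi.mul_apply]
    rw [h1, ← hδ0]
  have hκ0ne : ∀ᵐ ω ∂μ, κ0 ω ≠ 0 := by
    obtain ⟨ε0, hε0, h⟩ := hRWF
    filter_upwards [h] with ω h1 h0
    rw [h0] at h1; simp at h1; linarith
  have hγκ : (fun ω => γ0 ω * κ0 ω) =ᵐ[μ] fun ω => (μ[Y * π0|mV L]) ω - η0 ω * δ0 ω := by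
    filter_upwards [tπ, hκ0ne] with ω h1 h2
    simp only [hγ0]
    rw [div_mul_cancel₀ _ h2]
    simp only [condCov, Pi.sub_apply, Pi.mul_apply]
    rw [h1, ← hη0]
  -- ====================== LHS ======================
  have hφeq : φ = fun ω =>
      (κ ω)⁻¹ * (πn ω - δ ω) * Y ω
      + (κ ω)⁻¹ * (ξn ω - η ω - 2 * γ ω * (πn ω - δ ω)) * A ω
      + (γ ω + γ ω * (κ ω)⁻¹ * (πn ω * πn ω - δ ω * δ ω)
          - (κ ω)⁻¹ * ξn ω * πn ω + (κ ω)⁻¹ * η ω * δ ω)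
      - ψ0 := by
    rw [hφ]; funext ω
    have hne := hκne ω
    rcases hA01 ω with h | h <;> rw [h] <;> field_simp <;> ring
  have f1B : BddSM μ (mV Z ⊔ mV L) (fun ω => (κ ω)⁻¹ * (πn ω - δ ω)) :=
    (kinB.mono hm12).mul (πnB.sub (δB.mono hm12))
  have f2B : BddSM μ (mV Z ⊔ mV L)
      (fun ω => (κ ω)⁻¹ * (ξn ω - η ω - 2 * γ ω * (πn ω - δ ω))) :=
    (kinB.mono hm12).mul ((ξnB.sub (ηB.mono hm12)).sub
      (((BddSM.const 2).mul (γB.mono hm12)).mul (πnB.sub (δB.mono hm12))))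
  have rB : BddSM μ (mV Z ⊔ mV L) (fun ω =>
      γ ω + γ ω * (κ ω)⁻¹ * (πn ω * πn ω - δ ω * δ ω)
        - (κ ω)⁻¹ * ξn ω * πn ω + (κ ω)⁻¹ * η ω * δ ω) :=
    (((γB.mono hm12).add
        (((γB.mono hm12).mul (kinB.mono hm12)).mul
          ((πnB.mul πnB).sub ((δB.mul δB).mono hm12)))).sub
      (((kinB.mono hm12).mul ξnB).mul πnB)).add
      (((kinB.mul ηB).mul δB).mono hm12)
  have if1Y : Integrable (fun ω => (κ ω)⁻¹ * (πn ω - δ ω) * Y ω) μ :=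
    f1B.integrable_mul hm2 hintY
  have if2A : Integrable
      (fun ω => (κ ω)⁻¹ * (ξn ω - η ω - 2 * γ ω * (πn ω - δ ω)) * A ω) μ :=
    f2B.integrable_mul hm2 Aint
  have irr : Integrable (fun ω =>
      γ ω + γ ω * (κ ω)⁻¹ * (πn ω * πn ω - δ ω * δ ω)
        - (κ ω)⁻¹ * ξn ω * πn ω + (κ ω)⁻¹ * η ω * δ ω) μ := rB.integrable hm2
  have if1ξ : Integrable (fun ω => (κ ω)⁻¹ * (πn ω - δ ω) * ξ0 ω) μ :=
    f1B.integrable_mul hm2 ξ0int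
  have if2π : Integrable
      (fun ω => (κ ω)⁻¹ * (ξn ω - η ω - 2 * γ ω * (πn ω - δ ω)) * π0 ω) μ :=
    f2B.integrable_mul hm2 π0int
  have SY : ∫ ω, (κ ω)⁻¹ * (πn ω - δ ω) * Y ω ∂μ
      = ∫ ω, (κ ω)⁻¹ * (πn ω - δ ω) * ξ0 ω ∂μ :=
    f1B.integral_mul_eq hm2 hintY tY
  have SA : ∫ ω, (κ ω)⁻¹ * (ξn ω - η ω - 2 * γ ω * (πn ω - δ ω)) * A ω ∂μ
      = ∫ ω, (κ ω)⁻¹ * (ξn ω - η ω - 2 * γ ω * (πn ω - δ ω)) * π0 ω ∂μ :=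
    f2B.integral_mul_eq hm2 Aint tA
  have sconst : ∫ _ω, ψ0 ∂μ = ψ0 := by simp
  have isum : Integrable (fun ω =>
      (κ ω)⁻¹ * (πn ω - δ ω) * Y ω
      + (κ ω)⁻¹ * (ξn ω - η ω - 2 * γ ω * (πn ω - δ ω)) * A ω
      + (γ ω + γ ω * (κ ω)⁻¹ * (πn ω * πn ω - δ ω * δ ω)
          - (κ ω)⁻¹ * ξn ω * πn ω + (κ ω)⁻¹ * η ω * δ ω)) μ := (if1Y.add if2A).add irr
  have s0 : ∫ ω, ((κ ω)⁻¹ * (πn ω - δ ω) * Y ω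
      + (κ ω)⁻¹ * (ξn ω - η ω - 2 * γ ω * (πn ω - δ ω)) * A ω
      + (γ ω + γ ω * (κ ω)⁻¹ * (πn ω * πn ω - δ ω * δ ω)
          - (κ ω)⁻¹ * ξn ω * πn ω + (κ ω)⁻¹ * η ω * δ ω)
      - ψ0) ∂μ
      = ∫ ω, ((κ ω)⁻¹ * (πn ω - δ ω) * Y ω
      + (κ ω)⁻¹ * (ξn ω - η ω - 2 * γ ω * (πn ω - δ ω)) * A ω
      + (γ ω + γ ω * (κ ω)⁻¹ * (πn ω * πn ω - δ ω * δ ω)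
          - (κ ω)⁻¹ * ξn ω * πn ω + (κ ω)⁻¹ * η ω * δ ω)) ∂μ - ∫ _ω, ψ0 ∂μ :=
    integral_sub isum (integrable_const ψ0)
  have s1 : ∫ ω, ((κ ω)⁻¹ * (πn ω - δ ω) * Y ω
      + (κ ω)⁻¹ * (ξn ω - η ω - 2 * γ ω * (πn ω - δ ω)) * A ω
      + (γ ω + γ ω * (κ ω)⁻¹ * (πn ω * πn ω - δ ω * δ ω)
          - (κ ω)⁻¹ * ξn ω * πn ω + (κ ω)⁻¹ * η ω * δ ω)) ∂μ
      = ∫ ω, ((κ ω)⁻¹ * (πn ω - δ ω) * Y ω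
        + (κ ω)⁻¹ * (ξn ω - η ω - 2 * γ ω * (πn ω - δ ω)) * A ω) ∂μ
      + ∫ ω, (γ ω + γ ω * (κ ω)⁻¹ * (πn ω * πn ω - δ ω * δ ω)
          - (κ ω)⁻¹ * ξn ω * πn ω + (κ ω)⁻¹ * η ω * δ ω) ∂μ :=
    integral_add (if1Y.add if2A) irr
  have s2 : ∫ ω, ((κ ω)⁻¹ * (πn ω - δ ω) * Y ω
        + (κ ω)⁻¹ * (ξn ω - η ω - 2 * γ ω * (πn ω - δ ω)) * A ω) ∂μ
      = ∫ ω, (κ ω)⁻¹ * (πn ω - δ ω) * Y ω ∂μ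
      + ∫ ω, (κ ω)⁻¹ * (ξn ω - η ω - 2 * γ ω * (πn ω - δ ω)) * A ω ∂μ :=
    integral_add if1Y if2A
  have EL : ∫ ω, φ ω ∂μ
      = (∫ ω, (κ ω)⁻¹ * (πn ω - δ ω) * ξ0 ω ∂μ)
        + (∫ ω, (κ ω)⁻¹ * (ξn ω - η ω - 2 * γ ω * (πn ω - δ ω)) * π0 ω ∂μ)
        + (∫ ω, (γ ω + γ ω * (κ ω)⁻¹ * (πn ω * πn ω - δ ω * δ ω)
            - (κ ω)⁻¹ * ξn ω * πn ω + (κ ω)⁻¹ * η ω * δ ω) ∂μ)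
        - ψ0 := by
    rw [hφeq, s0, s1, s2, sconst, SY, SA]
  -- ====================== RHS ======================
  have hBae : (fun ω =>
      (κ ω)⁻¹ * ((γ ω - γ0 ω) * (κ ω - κ0 ω) - γ ω * (δ0 ω - δ ω) ^ 2 +
        γ ω * (π0 ω - πn ω) ^ 2 - (ξn ω - ξ0 ω) * (πn ω - π0 ω) +
        (η ω - η0 ω) * (δ ω - δ0 ω)))
      =ᵐ[μ] (fun ω =>
      γ ω - γ0 ω - (κ ω)⁻¹ * γ ω * ((μ[A * π0|mV L]) ω - δ0 ω * δ0 ω)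
      + (κ ω)⁻¹ * ((μ[Y * π0|mV L]) ω - η0 ω * δ0 ω)
      + (κ ω)⁻¹ * (-(γ ω * (δ0 ω - δ ω) ^ 2) + γ ω * (π0 ω - πn ω) ^ 2
          - (ξn ω - ξ0 ω) * (πn ω - π0 ω) + (η ω - η0 ω) * (δ ω - δ0 ω))) := by
    filter_upwards [hκ0ae, hγκ] with ω h1 h2
    have hne := hκne ω
    have h1' : κ0 ω = (μ[A * π0|mV L]) ω - δ0 ω * δ0 ω := h1
    have h2' : γ0 ω * κ0 ω = (μ[Y * π0|mV L]) ω - η0 ω * δ0 ω := h2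
    rw [← h1', ← h2']
    field_simp
    ring
  have ia : Integrable (fun ω => -((κ ω)⁻¹ * γ ω * (μ[A * π0|mV L]) ω)) μ :=
    (((kinB.mul γB).mul PB).integrable hm1).neg
  have ib : Integrable (fun ω => (κ ω)⁻¹ * (μ[Y * π0|mV L]) ω) μ :=
    kinB.integrable_mul hm1 Qint
  have UB : BddSM μ (mV Z ⊔ mV L) (fun ω =>
      γ ω + (κ ω)⁻¹ * γ ω * (δ0 ω * δ0 ω)
      + (κ ω)⁻¹ * (γ ω * ((π0 ω - πn ω) * (π0 ω - πn ω))
          - γ ω * ((δ0 ω - δ ω) * (δ0 ω - δ ω))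
          - ξn ω * (πn ω - π0 ω) + η ω * (δ ω - δ0 ω))) :=
    ((γB.mono hm12).add
        (((kinB.mul γB).mono hm12).mul ((δ0B.mul δ0B).mono hm12))).add
      ((kinB.mono hm12).mul
        (((((γB.mono hm12).mul ((π0B.sub πnB).mul (π0B.sub πnB))).sub
            ((γB.mul ((δ0B.sub δB).mul (δ0B.sub δB))).mono hm12)).sub
          (ξnB.mul (πnB.sub π0B))).add ((ηB.mul (δB.sub δ0B)).mono hm12)))
  have V1B : BddSM μ (mV Z ⊔ mV L) (fun ω => (κ ω)⁻¹ * (πn ω - π0 ω)) :=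
    (kinB.mono hm12).mul (πnB.sub π0B)
  have V2B : BddSM μ (mV L) (fun ω => -((κ ω)⁻¹ * δ0 ω) - (κ ω)⁻¹ * (δ ω - δ0 ω)) :=
    ((kinB.mul δ0B).neg).sub (kinB.mul (δB.sub δ0B))
  have iWp : Integrable (fun ω =>
      (γ ω + (κ ω)⁻¹ * γ ω * (δ0 ω * δ0 ω)
      + (κ ω)⁻¹ * (γ ω * ((π0 ω - πn ω) * (π0 ω - πn ω))
          - γ ω * ((δ0 ω - δ ω) * (δ0 ω - δ ω))
          - ξn ω * (πn ω - π0 ω) + η ω * (δ ω - δ0 ω)))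
      + (κ ω)⁻¹ * (πn ω - π0 ω) * ξ0 ω
      + (-((κ ω)⁻¹ * δ0 ω) - (κ ω)⁻¹ * (δ ω - δ0 ω)) * η0 ω) μ :=
    ((UB.integrable hm2).add (V1B.integrable_mul hm2 ξ0int)).add
      (V2B.integrable_mul hm1 η0int)
  have iW : Integrable (fun ω =>
      (γ ω + (κ ω)⁻¹ * γ ω * (δ0 ω * δ0 ω)
      + (κ ω)⁻¹ * (γ ω * ((π0 ω - πn ω) * (π0 ω - πn ω))
          - γ ω * ((δ0 ω - δ ω) * (δ0 ω - δ ω))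
          - ξn ω * (πn ω - π0 ω) + η ω * (δ ω - δ0 ω)))
      + (κ ω)⁻¹ * (πn ω - π0 ω) * ξ0 ω
      + (-((κ ω)⁻¹ * δ0 ω) - (κ ω)⁻¹ * (δ ω - δ0 ω)) * η0 ω
      - γ0 ω) μ := iWp.sub hintγ0
  have b0 : ∫ ω, (γ ω - γ0 ω - (κ ω)⁻¹ * γ ω * ((μ[A * π0|mV L]) ω - δ0 ω * δ0 ω)
      + (κ ω)⁻¹ * ((μ[Y * π0|mV L]) ω - η0 ω * δ0 ω)
      + (κ ω)⁻¹ * (-(γ ω * (δ0 ω - δ ω) ^ 2) + γ ω * (π0 ω - πn ω) ^ 2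
          - (ξn ω - ξ0 ω) * (πn ω - π0 ω) + (η ω - η0 ω) * (δ ω - δ0 ω))) ∂μ
      = ∫ ω, (-((κ ω)⁻¹ * γ ω * (μ[A * π0|mV L]) ω)
      + (κ ω)⁻¹ * (μ[Y * π0|mV L]) ω
      + ((γ ω + (κ ω)⁻¹ * γ ω * (δ0 ω * δ0 ω)
      + (κ ω)⁻¹ * (γ ω * ((π0 ω - πn ω) * (π0 ω - πn ω))
          - γ ω * ((δ0 ω - δ ω) * (δ0 ω - δ ω))
          - ξn ω * (πn ω - π0 ω) + η ω * (δ ω - δ0 ω)))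
      + (κ ω)⁻¹ * (πn ω - π0 ω) * ξ0 ω
      + (-((κ ω)⁻¹ * δ0 ω) - (κ ω)⁻¹ * (δ ω - δ0 ω)) * η0 ω
      - γ0 ω)) ∂μ :=
    integral_congr_ae (Filter.Eventually.of_forall fun ω => by ring)
  have b1 : ∫ ω, (-((κ ω)⁻¹ * γ ω * (μ[A * π0|mV L]) ω)
      + (κ ω)⁻¹ * (μ[Y * π0|mV L]) ω
      + ((γ ω + (κ ω)⁻¹ * γ ω * (δ0 ω * δ0 ω)
      + (κ ω)⁻¹ * (γ ω * ((π0 ω - πn ω) * (π0 ω - πn ω))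
          - γ ω * ((δ0 ω - δ ω) * (δ0 ω - δ ω))
          - ξn ω * (πn ω - π0 ω) + η ω * (δ ω - δ0 ω)))
      + (κ ω)⁻¹ * (πn ω - π0 ω) * ξ0 ω
      + (-((κ ω)⁻¹ * δ0 ω) - (κ ω)⁻¹ * (δ ω - δ0 ω)) * η0 ω
      - γ0 ω)) ∂μ
      = (∫ ω, (-((κ ω)⁻¹ * γ ω * (μ[A * π0|mV L]) ω)
          + (κ ω)⁻¹ * (μ[Y * π0|mV L]) ω) ∂μ)
      + ∫ ω, ((γ ω + (κ ω)⁻¹ * γ ω * (δ0 ω * δ0 ω)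
      + (κ ω)⁻¹ * (γ ω * ((π0 ω - πn ω) * (π0 ω - πn ω))
          - γ ω * ((δ0 ω - δ ω) * (δ0 ω - δ ω))
          - ξn ω * (πn ω - π0 ω) + η ω * (δ ω - δ0 ω)))
      + (κ ω)⁻¹ * (πn ω - π0 ω) * ξ0 ω
      + (-((κ ω)⁻¹ * δ0 ω) - (κ ω)⁻¹ * (δ ω - δ0 ω)) * η0 ω
      - γ0 ω) ∂μ := integral_add (ia.add ib) iW
  have b2 : ∫ ω, (-((κ ω)⁻¹ * γ ω * (μ[A * π0|mV L]) ω)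
          + (κ ω)⁻¹ * (μ[Y * π0|mV L]) ω) ∂μ
      = (∫ ω, -((κ ω)⁻¹ * γ ω * (μ[A * π0|mV L]) ω) ∂μ)
      + ∫ ω, (κ ω)⁻¹ * (μ[Y * π0|mV L]) ω ∂μ := integral_add ia ib
  have b3 : ∫ ω, -((κ ω)⁻¹ * γ ω * (μ[A * π0|mV L]) ω) ∂μ
      = -∫ ω, (κ ω)⁻¹ * γ ω * (μ[A * π0|mV L]) ω ∂μ := integral_neg _
  have b4 : ∫ ω, ((γ ω + (κ ω)⁻¹ * γ ω * (δ0 ω * δ0 ω)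
      + (κ ω)⁻¹ * (γ ω * ((π0 ω - πn ω) * (π0 ω - πn ω))
          - γ ω * ((δ0 ω - δ ω) * (δ0 ω - δ ω))
          - ξn ω * (πn ω - π0 ω) + η ω * (δ ω - δ0 ω)))
      + (κ ω)⁻¹ * (πn ω - π0 ω) * ξ0 ω
      + (-((κ ω)⁻¹ * δ0 ω) - (κ ω)⁻¹ * (δ ω - δ0 ω)) * η0 ω
      - γ0 ω) ∂μ
      = (∫ ω, ((γ ω + (κ ω)⁻¹ * γ ω * (δ0 ω * δ0 ω)
      + (κ ω)⁻¹ * (γ ω * ((π0 ω - πn ω) * (π0 ω - πn ω))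
          - γ ω * ((δ0 ω - δ ω) * (δ0 ω - δ ω))
          - ξn ω * (πn ω - π0 ω) + η ω * (δ ω - δ0 ω)))
      + (κ ω)⁻¹ * (πn ω - π0 ω) * ξ0 ω
      + (-((κ ω)⁻¹ * δ0 ω) - (κ ω)⁻¹ * (δ ω - δ0 ω)) * η0 ω) ∂μ)
      - ∫ ω, γ0 ω ∂μ := integral_sub iWp hintγ0
  -- swaps for the two conditional-expectation factors
  have sPa : ∫ ω, (κ ω)⁻¹ * γ ω * (A ω * π0 ω) ∂μ
      = ∫ ω, (κ ω)⁻¹ * γ ω * (μ[A * π0|mV L]) ω ∂μ :=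
    (kinB.mul γB).integral_mul_condexp hm1 Aπ0int
  have sPb : ∫ ω, (κ ω)⁻¹ * γ ω * (A ω * π0 ω) ∂μ
      = ∫ ω, (κ ω)⁻¹ * γ ω * π0 ω * A ω ∂μ :=
    integral_congr_ae (Filter.Eventually.of_forall fun ω => by ring)
  have sPc : ∫ ω, (κ ω)⁻¹ * γ ω * π0 ω * A ω ∂μ
      = ∫ ω, (κ ω)⁻¹ * γ ω * π0 ω * π0 ω ∂μ :=
    (((kinB.mul γB).mono hm12).mul π0B).integral_mul_eq hm2 Aint tA
  have sP : ∫ ω, (κ ω)⁻¹ * γ ω * (μ[A * π0|mV L]) ω ∂μ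
      = ∫ ω, (κ ω)⁻¹ * γ ω * π0 ω * π0 ω ∂μ := sPa.symm.trans (sPb.trans sPc)
  have sQa : ∫ ω, (κ ω)⁻¹ * (Y ω * π0 ω) ∂μ
      = ∫ ω, (κ ω)⁻¹ * (μ[Y * π0|mV L]) ω ∂μ :=
    kinB.integral_mul_condexp hm1 Yπ0int
  have sQb : ∫ ω, (κ ω)⁻¹ * (Y ω * π0 ω) ∂μ
      = ∫ ω, (κ ω)⁻¹ * π0 ω * Y ω ∂μ :=
    integral_congr_ae (Filter.Eventually.of_forall fun ω => by ring)
  have sQc : ∫ ω, (κ ω)⁻¹ * π0 ω * Y ω ∂μ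
      = ∫ ω, (κ ω)⁻¹ * π0 ω * ξ0 ω ∂μ :=
    ((kinB.mono hm12).mul π0B).integral_mul_eq hm2 hintY tY
  have sQ : ∫ ω, (κ ω)⁻¹ * (μ[Y * π0|mV L]) ω ∂μ
      = ∫ ω, (κ ω)⁻¹ * π0 ω * ξ0 ω ∂μ := sQa.symm.trans (sQb.trans sQc)
  -- residual swaps
  have H1B : BddSM μ (mV L) (fun ω => (κ ω)⁻¹ * (2 * γ ω * δ ω - η ω)) :=
    kinB.mul ((((BddSM.const 2).mul γB).mul δB).sub ηB)
  have H2B : BddSM μ (mV L) (fun ω => -((κ ω)⁻¹ * δ ω)) := (kinB.mul δB).neg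
  have t1 : ∫ ω, (κ ω)⁻¹ * (2 * γ ω * δ ω - η ω) * π0 ω ∂μ
      = ∫ ω, (κ ω)⁻¹ * (2 * γ ω * δ ω - η ω) * δ0 ω ∂μ :=
    H1B.integral_mul_eq hm1 π0int tπ
  have t2 : ∫ ω, -((κ ω)⁻¹ * δ ω) * ξ0 ω ∂μ
      = ∫ ω, -((κ ω)⁻¹ * δ ω) * η0 ω ∂μ :=
    H2B.integral_mul_eq hm1 ξ0int tξ
  have iz1 : Integrable (fun ω => -((κ ω)⁻¹ * γ ω * π0 ω * π0 ω)) μ :=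
    (((((kinB.mul γB).mono hm12).mul π0B).mul π0B).integrable hm2).neg
  have iz2 : Integrable (fun ω => (κ ω)⁻¹ * π0 ω * ξ0 ω) μ :=
    ((kinB.mono hm12).mul π0B).integrable_mul hm2 ξ0int
  have iz4 : Integrable (fun ω => (κ ω)⁻¹ * (2 * γ ω * δ ω - η ω) * π0 ω) μ :=
    ((H1B.mono hm12).mul π0B).integrable hm2
  have iz5 : Integrable (fun ω => (κ ω)⁻¹ * (2 * γ ω * δ ω - η ω) * δ0 ω) μ :=
    (H1B.mul δ0B).integrable hm1
  have iz6 : Integrable (fun ω => -((κ ω)⁻¹ * δ ω) * ξ0 ω) μ :=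
    H2B.integrable_mul hm1 ξ0int
  have iz7 : Integrable (fun ω => -((κ ω)⁻¹ * δ ω) * η0 ω) μ :=
    H2B.integrable_mul hm1 η0int
  have EXa : ∫ ω, ((κ ω)⁻¹ * (πn ω - δ ω) * ξ0 ω
      + (κ ω)⁻¹ * (ξn ω - η ω - 2 * γ ω * (πn ω - δ ω)) * π0 ω) ∂μ
      = (∫ ω, (κ ω)⁻¹ * (πn ω - δ ω) * ξ0 ω ∂μ) + ∫ ω, (κ ω)⁻¹ * (ξn ω - η ω - 2 * γ ω * (πn ω - δ ω)) * π0 ω ∂μ := integral_add if1ξ if2π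
  have EXb : ∫ ω, ((κ ω)⁻¹ * (πn ω - δ ω) * ξ0 ω
      + (κ ω)⁻¹ * (ξn ω - η ω - 2 * γ ω * (πn ω - δ ω)) * π0 ω
      + (γ ω + γ ω * (κ ω)⁻¹ * (πn ω * πn ω - δ ω * δ ω)
          - (κ ω)⁻¹ * ξn ω * πn ω + (κ ω)⁻¹ * η ω * δ ω)) ∂μ
      = (∫ ω, ((κ ω)⁻¹ * (πn ω - δ ω) * ξ0 ω
      + (κ ω)⁻¹ * (ξn ω - η ω - 2 * γ ω * (πn ω - δ ω)) * π0 ω) ∂μ) + ∫ ω, (γ ω + γ ω * (κ ω)⁻¹ * (πn ω * πn ω - δ ω * δ ω)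
          - (κ ω)⁻¹ * ξn ω * πn ω + (κ ω)⁻¹ * η ω * δ ω) ∂μ :=
    integral_add (if1ξ.add if2π) irr
  have EKEY : ∫ ω, ((κ ω)⁻¹ * (πn ω - δ ω) * ξ0 ω
      + (κ ω)⁻¹ * (ξn ω - η ω - 2 * γ ω * (πn ω - δ ω)) * π0 ω
      + (γ ω + γ ω * (κ ω)⁻¹ * (πn ω * πn ω - δ ω * δ ω)
          - (κ ω)⁻¹ * ξn ω * πn ω + (κ ω)⁻¹ * η ω * δ ω)) ∂μ
      = ∫ ω, (-((κ ω)⁻¹ * γ ω * π0 ω * π0 ω)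
      + (κ ω)⁻¹ * π0 ω * ξ0 ω
      + ((γ ω + (κ ω)⁻¹ * γ ω * (δ0 ω * δ0 ω)
      + (κ ω)⁻¹ * (γ ω * ((π0 ω - πn ω) * (π0 ω - πn ω))
          - γ ω * ((δ0 ω - δ ω) * (δ0 ω - δ ω))
          - ξn ω * (πn ω - π0 ω) + η ω * (δ ω - δ0 ω)))
      + (κ ω)⁻¹ * (πn ω - π0 ω) * ξ0 ω
      + (-((κ ω)⁻¹ * δ0 ω) - (κ ω)⁻¹ * (δ ω - δ0 ω)) * η0 ω)
      + (κ ω)⁻¹ * (2 * γ ω * δ ω - η ω) * π0 ω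
      - (κ ω)⁻¹ * (2 * γ ω * δ ω - η ω) * δ0 ω
      + -((κ ω)⁻¹ * δ ω) * ξ0 ω
      - -((κ ω)⁻¹ * δ ω) * η0 ω) ∂μ :=
    integral_congr_ae (Filter.Eventually.of_forall fun ω => by ring)
  have EZ1 : ∫ ω, (-((κ ω)⁻¹ * γ ω * π0 ω * π0 ω)
      + (κ ω)⁻¹ * π0 ω * ξ0 ω) ∂μ
      = (∫ ω, -((κ ω)⁻¹ * γ ω * π0 ω * π0 ω) ∂μ) + ∫ ω, (κ ω)⁻¹ * π0 ω * ξ0 ω ∂μ := integral_add iz1 iz2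
  have EZ2 : ∫ ω, (-((κ ω)⁻¹ * γ ω * π0 ω * π0 ω)
      + (κ ω)⁻¹ * π0 ω * ξ0 ω
      + ((γ ω + (κ ω)⁻¹ * γ ω * (δ0 ω * δ0 ω)
      + (κ ω)⁻¹ * (γ ω * ((π0 ω - πn ω) * (π0 ω - πn ω))
          - γ ω * ((δ0 ω - δ ω) * (δ0 ω - δ ω))
          - ξn ω * (πn ω - π0 ω) + η ω * (δ ω - δ0 ω)))
      + (κ ω)⁻¹ * (πn ω - π0 ω) * ξ0 ω
      + (-((κ ω)⁻¹ * δ0 ω) - (κ ω)⁻¹ * (δ ω - δ0 ω)) * η0 ω)) ∂μ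
      = (∫ ω, (-((κ ω)⁻¹ * γ ω * π0 ω * π0 ω)
      + (κ ω)⁻¹ * π0 ω * ξ0 ω) ∂μ) + ∫ ω, ((γ ω + (κ ω)⁻¹ * γ ω * (δ0 ω * δ0 ω)
      + (κ ω)⁻¹ * (γ ω * ((π0 ω - πn ω) * (π0 ω - πn ω))
          - γ ω * ((δ0 ω - δ ω) * (δ0 ω - δ ω))
          - ξn ω * (πn ω - π0 ω) + η ω * (δ ω - δ0 ω)))
      + (κ ω)⁻¹ * (πn ω - π0 ω) * ξ0 ω
      + (-((κ ω)⁻¹ * δ0 ω) - (κ ω)⁻¹ * (δ ω - δ0 ω)) * η0 ω) ∂μ :=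
    integral_add (iz1.add iz2) iWp
  have EZ3 : ∫ ω, (-((κ ω)⁻¹ * γ ω * π0 ω * π0 ω)
      + (κ ω)⁻¹ * π0 ω * ξ0 ω
      + ((γ ω + (κ ω)⁻¹ * γ ω * (δ0 ω * δ0 ω)
      + (κ ω)⁻¹ * (γ ω * ((π0 ω - πn ω) * (π0 ω - πn ω))
          - γ ω * ((δ0 ω - δ ω) * (δ0 ω - δ ω))
          - ξn ω * (πn ω - π0 ω) + η ω * (δ ω - δ0 ω)))
      + (κ ω)⁻¹ * (πn ω - π0 ω) * ξ0 ω
      + (-((κ ω)⁻¹ * δ0 ω) - (κ ω)⁻¹ * (δ ω - δ0 ω)) * η0 ω)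
      + (κ ω)⁻¹ * (2 * γ ω * δ ω - η ω) * π0 ω) ∂μ
      = (∫ ω, (-((κ ω)⁻¹ * γ ω * π0 ω * π0 ω)
      + (κ ω)⁻¹ * π0 ω * ξ0 ω
      + ((γ ω + (κ ω)⁻¹ * γ ω * (δ0 ω * δ0 ω)
      + (κ ω)⁻¹ * (γ ω * ((π0 ω - πn ω) * (π0 ω - πn ω))
          - γ ω * ((δ0 ω - δ ω) * (δ0 ω - δ ω))
          - ξn ω * (πn ω - π0 ω) + η ω * (δ ω - δ0 ω)))
      + (κ ω)⁻¹ * (πn ω - π0 ω) * ξ0 ω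
      + (-((κ ω)⁻¹ * δ0 ω) - (κ ω)⁻¹ * (δ ω - δ0 ω)) * η0 ω)) ∂μ) + ∫ ω, (κ ω)⁻¹ * (2 * γ ω * δ ω - η ω) * π0 ω ∂μ :=
    integral_add ((iz1.add iz2).add iWp) iz4
  have EZ4 : ∫ ω, (-((κ ω)⁻¹ * γ ω * π0 ω * π0 ω)
      + (κ ω)⁻¹ * π0 ω * ξ0 ω
      + ((γ ω + (κ ω)⁻¹ * γ ω * (δ0 ω * δ0 ω)
      + (κ ω)⁻¹ * (γ ω * ((π0 ω - πn ω) * (π0 ω - πn ω))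
          - γ ω * ((δ0 ω - δ ω) * (δ0 ω - δ ω))
          - ξn ω * (πn ω - π0 ω) + η ω * (δ ω - δ0 ω)))
      + (κ ω)⁻¹ * (πn ω - π0 ω) * ξ0 ω
      + (-((κ ω)⁻¹ * δ0 ω) - (κ ω)⁻¹ * (δ ω - δ0 ω)) * η0 ω)
      + (κ ω)⁻¹ * (2 * γ ω * δ ω - η ω) * π0 ω
      - (κ ω)⁻¹ * (2 * γ ω * δ ω - η ω) * δ0 ω) ∂μ
      = (∫ ω, (-((κ ω)⁻¹ * γ ω * π0 ω * π0 ω)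
      + (κ ω)⁻¹ * π0 ω * ξ0 ω
      + ((γ ω + (κ ω)⁻¹ * γ ω * (δ0 ω * δ0 ω)
      + (κ ω)⁻¹ * (γ ω * ((π0 ω - πn ω) * (π0 ω - πn ω))
          - γ ω * ((δ0 ω - δ ω) * (δ0 ω - δ ω))
          - ξn ω * (πn ω - π0 ω) + η ω * (δ ω - δ0 ω)))
      + (κ ω)⁻¹ * (πn ω - π0 ω) * ξ0 ω
      + (-((κ ω)⁻¹ * δ0 ω) - (κ ω)⁻¹ * (δ ω - δ0 ω)) * η0 ω)
      + (κ ω)⁻¹ * (2 * γ ω * δ ω - η ω) * π0 ω) ∂μ) - ∫ ω, (κ ω)⁻¹ * (2 * γ ω * δ ω - η ω) * δ0 ω ∂μ :=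
    integral_sub (((iz1.add iz2).add iWp).add iz4) iz5
  have EZ5 : ∫ ω, (-((κ ω)⁻¹ * γ ω * π0 ω * π0 ω)
      + (κ ω)⁻¹ * π0 ω * ξ0 ω
      + ((γ ω + (κ ω)⁻¹ * γ ω * (δ0 ω * δ0 ω)
      + (κ ω)⁻¹ * (γ ω * ((π0 ω - πn ω) * (π0 ω - πn ω))
          - γ ω * ((δ0 ω - δ ω) * (δ0 ω - δ ω))
          - ξn ω * (πn ω - π0 ω) + η ω * (δ ω - δ0 ω)))
      + (κ ω)⁻¹ * (πn ω - π0 ω) * ξ0 ω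
      + (-((κ ω)⁻¹ * δ0 ω) - (κ ω)⁻¹ * (δ ω - δ0 ω)) * η0 ω)
      + (κ ω)⁻¹ * (2 * γ ω * δ ω - η ω) * π0 ω
      - (κ ω)⁻¹ * (2 * γ ω * δ ω - η ω) * δ0 ω
      + -((κ ω)⁻¹ * δ ω) * ξ0 ω) ∂μ
      = (∫ ω, (-((κ ω)⁻¹ * γ ω * π0 ω * π0 ω)
      + (κ ω)⁻¹ * π0 ω * ξ0 ω
      + ((γ ω + (κ ω)⁻¹ * γ ω * (δ0 ω * δ0 ω)
      + (κ ω)⁻¹ * (γ ω * ((π0 ω - πn ω) * (π0 ω - πn ω))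
          - γ ω * ((δ0 ω - δ ω) * (δ0 ω - δ ω))
          - ξn ω * (πn ω - π0 ω) + η ω * (δ ω - δ0 ω)))
      + (κ ω)⁻¹ * (πn ω - π0 ω) * ξ0 ω
      + (-((κ ω)⁻¹ * δ0 ω) - (κ ω)⁻¹ * (δ ω - δ0 ω)) * η0 ω)
      + (κ ω)⁻¹ * (2 * γ ω * δ ω - η ω) * π0 ω
      - (κ ω)⁻¹ * (2 * γ ω * δ ω - η ω) * δ0 ω) ∂μ) + ∫ ω, -((κ ω)⁻¹ * δ ω) * ξ0 ω ∂μ :=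
    integral_add ((((iz1.add iz2).add iWp).add iz4).sub iz5) iz6
  have EZ6 : ∫ ω, (-((κ ω)⁻¹ * γ ω * π0 ω * π0 ω)
      + (κ ω)⁻¹ * π0 ω * ξ0 ω
      + ((γ ω + (κ ω)⁻¹ * γ ω * (δ0 ω * δ0 ω)
      + (κ ω)⁻¹ * (γ ω * ((π0 ω - πn ω) * (π0 ω - πn ω))
          - γ ω * ((δ0 ω - δ ω) * (δ0 ω - δ ω))
          - ξn ω * (πn ω - π0 ω) + η ω * (δ ω - δ0 ω)))
      + (κ ω)⁻¹ * (πn ω - π0 ω) * ξ0 ω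
      + (-((κ ω)⁻¹ * δ0 ω) - (κ ω)⁻¹ * (δ ω - δ0 ω)) * η0 ω)
      + (κ ω)⁻¹ * (2 * γ ω * δ ω - η ω) * π0 ω
      - (κ ω)⁻¹ * (2 * γ ω * δ ω - η ω) * δ0 ω
      + -((κ ω)⁻¹ * δ ω) * ξ0 ω
      - -((κ ω)⁻¹ * δ ω) * η0 ω) ∂μ
      = (∫ ω, (-((κ ω)⁻¹ * γ ω * π0 ω * π0 ω)
      + (κ ω)⁻¹ * π0 ω * ξ0 ω
      + ((γ ω + (κ ω)⁻¹ * γ ω * (δ0 ω * δ0 ω)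
      + (κ ω)⁻¹ * (γ ω * ((π0 ω - πn ω) * (π0 ω - πn ω))
          - γ ω * ((δ0 ω - δ ω) * (δ0 ω - δ ω))
          - ξn ω * (πn ω - π0 ω) + η ω * (δ ω - δ0 ω)))
      + (κ ω)⁻¹ * (πn ω - π0 ω) * ξ0 ω
      + (-((κ ω)⁻¹ * δ0 ω) - (κ ω)⁻¹ * (δ ω - δ0 ω)) * η0 ω)
      + (κ ω)⁻¹ * (2 * γ ω * δ ω - η ω) * π0 ω
      - (κ ω)⁻¹ * (2 * γ ω * δ ω - η ω) * δ0 ω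
      + -((κ ω)⁻¹ * δ ω) * ξ0 ω) ∂μ) - ∫ ω, -((κ ω)⁻¹ * δ ω) * η0 ω ∂μ :=
    integral_sub (((((iz1.add iz2).add iWp).add iz4).sub iz5).add iz6) iz7
  have EB0 : ∫ ω, (κ ω)⁻¹ * ((γ ω - γ0 ω) * (κ ω - κ0 ω) - γ ω * (δ0 ω - δ ω) ^ 2 +
            γ ω * (π0 ω - πn ω) ^ 2 - (ξn ω - ξ0 ω) * (πn ω - π0 ω) +
            (η ω - η0 ω) * (δ ω - δ0 ω)) ∂μ
      = ∫ ω, (γ ω - γ0 ω - (κ ω)⁻¹ * γ ω * ((μ[A * π0|mV L]) ω - δ0 ω * δ0 ω)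
      + (κ ω)⁻¹ * ((μ[Y * π0|mV L]) ω - η0 ω * δ0 ω)
      + (κ ω)⁻¹ * (-(γ ω * (δ0 ω - δ ω) ^ 2) + γ ω * (π0 ω - πn ω) ^ 2
          - (ξn ω - ξ0 ω) * (πn ω - π0 ω) + (η ω - η0 ω) * (δ ω - δ0 ω))) ∂μ :=
    integral_congr_ae hBae
  have EN : ∫ ω, -((κ ω)⁻¹ * γ ω * π0 ω * π0 ω) ∂μ
      = -∫ ω, (κ ω)⁻¹ * γ ω * π0 ω * π0 ω ∂μ := integral_neg _
  rw [EL, EB0, b0, b1, b2, b3, b4, sP, sQ, ← hψ0]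
  linarith [EN, EXa, EXb, EKEY, EZ1, EZ2, EZ3, EZ4, EZ5, EZ6, t1, t2]
end

section
/- (Discretization preserves the AIV structure) Let Z be a random variable and S = {S₁,…,S_M} a finite measurable partition of its range; define Z_S = m on {Z ∈ S_m}. Suppose Z ⊥ U | L and P(A=a | Z,U,L) = b(U,L) + c(Z,L). Then P(A=a | Z_S, U, L) = b(U,L) + c̃(Z_S, L), where c̃(m, L) = E[c(Z,L) | Z_S = m, L]; i.e., Z_S is an additive IV for A = a. -/
open MeasureTheory ProbabilityTheory

section Aux

variable {Ω : Type*} [mΩ : MeasurableSpace Ω]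

lemma indicator_eq_mul_one (s : Set Ω) (f : Ω → ℝ) :
    s.indicator f = fun ω => f ω * s.indicator (fun _ => (1 : ℝ)) ω := by
  funext ω
  by_cases h : ω ∈ s <;> simp [Set.indicator, h]

/-- Key lemma: if `Z ⊥ U | L`, then `P(U ∈ F | Z, L) = P(U ∈ F | L)` a.e. -/
lemma condexp_indicator_sup_comap [StandardBorelSpace Ω] (μ : Measure Ω)
    [IsProbabilityMeasure μ]
    {Z U L : Ω → ℝ} (hZ : Measurable Z) (hU : Measurable U) (hL : Measurable L)
    (hZU : CondIndepFun (mV L) (measurable_iff_comap_le.mp hL) Z U μ)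
    {F : Set ℝ} (hF : MeasurableSet F) :
    μ⟦U ⁻¹' F | mV Z ⊔ mV L⟧ =ᵐ[μ] μ⟦U ⁻¹' F | mV L⟧ := by
  have hmL : mV L ≤ mΩ := measurable_iff_comap_le.mp hL
  have hmZ : mV Z ≤ mΩ := measurable_iff_comap_le.mp hZ
  have hmW : mV Z ⊔ mV L ≤ mΩ := sup_le hmZ hmL
  set ind : Ω → ℝ := (U ⁻¹' F).indicator (fun _ => (1 : ℝ)) with hind_def
  have hind_int : Integrable ind μ := (integrable_const (1 : ℝ)).indicator (hU hF)
  set eF : Ω → ℝ := μ[ind | mV L] with heF_def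
  have heF_int : Integrable eF μ := integrable_condExp
  -- `eF` is a.e. bounded by 1
  have heF_bdd : ∀ᵐ ω ∂μ, ‖eF ω‖ ≤ 1 := by
    have h0 : 0 ≤ᵐ[μ] eF :=
      condExp_nonneg (ae_of_all _ fun ω => Set.indicator_nonneg (fun _ _ => zero_le_one) ω)
    have h1 : eF ≤ᵐ[μ] μ[(fun _ => (1 : ℝ)) | mV L] := by
      refine condExp_mono hind_int (integrable_const _) (ae_of_all _ fun ω => ?_)
      by_cases h : ω ∈ U ⁻¹' F <;> simp [ind, Set.indicator, h]
    have h2 : μ[(fun _ => (1 : ℝ)) | mV L] = fun _ => (1 : ℝ) := condExp_const hmL _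
    rw [h2] at h1
    filter_upwards [h0, h1] with ω h0 h1
    simp only [Pi.zero_apply] at h0
    rw [Real.norm_eq_abs, abs_le]
    exact ⟨by linarith, h1⟩
  -- π-system generating `mV Z ⊔ mV L`
  set C : Set (Set Ω) :=
    {t | ∃ s G, MeasurableSet s ∧ MeasurableSet G ∧ t = Z ⁻¹' s ∩ L ⁻¹' G} with hC_def
  have h_eq : (mV Z ⊔ mV L) = MeasurableSpace.generateFrom C := by
    refine le_antisymm (sup_le ?_ ?_) (MeasurableSpace.generateFrom_le ?_)
    · rintro t ⟨s, hs, rfl⟩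
      exact MeasurableSpace.measurableSet_generateFrom
        ⟨s, Set.univ, hs, MeasurableSet.univ, by simp⟩
    · rintro t ⟨G, hG, rfl⟩
      exact MeasurableSpace.measurableSet_generateFrom
        ⟨Set.univ, G, MeasurableSet.univ, hG, by simp⟩
    · rintro t ⟨s, G, hs, hG, rfl⟩
      exact MeasurableSet.inter ((le_sup_left : mV Z ≤ mV Z ⊔ mV L) _ ⟨s, hs, rfl⟩)
        ((le_sup_right : mV L ≤ mV Z ⊔ mV L) _ ⟨G, hG, rfl⟩)
  have h_pi : IsPiSystem C := by
    rintro t ⟨s, G, hs, hG, rfl⟩ t' ⟨s', G', hs', hG', rfl⟩ _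
    refine ⟨s ∩ s', G ∩ G', hs.inter hs', hG.inter hG', ?_⟩
    ext ω
    simp only [Set.mem_inter_iff, Set.mem_preimage]
    tauto
  have key : ∀ t, MeasurableSet[mV Z ⊔ mV L] t →
      ∫ x in t, eF x ∂μ = ∫ x in t, ind x ∂μ := by
    have h_univ : ∫ x, eF x ∂μ = ∫ x, ind x ∂μ := integral_condExp hmL
    intro t ht
    refine MeasurableSpace.induction_on_inter (m := mV Z ⊔ mV L)
      (C := fun t _ => ∫ x in t, eF x ∂μ = ∫ x in t, ind x ∂μ) h_eq h_pi
      (by simp) ?_ ?_ ?_ t ht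
    · -- basic case
      rintro t ⟨s, G, hs, hG, rfl⟩
      have hGL : MeasurableSet[mV L] (L ⁻¹' G) := ⟨G, hG, rfl⟩
      set indZ : Ω → ℝ := (Z ⁻¹' s).indicator (fun _ => (1 : ℝ)) with hindZ_def
      have hindZ_int : Integrable indZ μ := (integrable_const (1 : ℝ)).indicator (hZ hs)
      have hprod_int : Integrable (fun ω => eF ω * indZ ω) μ :=
        hindZ_int.bdd_mul heF_int.aestronglyMeasurable heF_bdd
      -- LHS
      have hL1 : ∫ x in Z ⁻¹' s ∩ L ⁻¹' G, eF x ∂μ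
          = ∫ x in L ⁻¹' G, (fun ω => eF ω * indZ ω) x ∂μ := by
        rw [Set.inter_comm, ← setIntegral_indicator (hZ hs)]
        refine setIntegral_congr_fun (hmL _ hGL) fun ω _ => ?_
        by_cases h : ω ∈ Z ⁻¹' s <;> simp [indZ, Set.indicator, h]
      have hpull : μ[(fun ω => eF ω * indZ ω) | mV L]
          =ᵐ[μ] fun ω => eF ω * (μ[indZ | mV L]) ω := by
        have h := condExp_mul_of_stronglyMeasurable_left (m := mV L) (μ := μ)
          (f := eF) (g := indZ) stronglyMeasurable_condExp
          (by simpa [Pi.mul_def] using hprod_int) hindZ_int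
        simpa [Pi.mul_def] using h
      -- RHS
      have hR1 : ∫ x in Z ⁻¹' s ∩ L ⁻¹' G, ind x ∂μ
          = ∫ x in L ⁻¹' G, ((Z ⁻¹' s ∩ U ⁻¹' F).indicator (fun _ => (1 : ℝ))) x ∂μ := by
        rw [Set.inter_comm, ← setIntegral_indicator (hZ hs)]
        refine setIntegral_congr_fun (hmL _ hGL) fun ω _ => ?_
        rw [hind_def, Set.indicator_indicator]
      have hCI := (condIndepFun_iff_condExp_inter_preimage_eq_mul
          (m' := mV L) (hm' := measurable_iff_comap_le.mp hL) hZ hU).mp hZU s F hs hF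
      calc ∫ x in Z ⁻¹' s ∩ L ⁻¹' G, eF x ∂μ
          = ∫ x in L ⁻¹' G, (fun ω => eF ω * indZ ω) x ∂μ := hL1
        _ = ∫ x in L ⁻¹' G, (μ[(fun ω => eF ω * indZ ω) | mV L]) x ∂μ :=
            (setIntegral_condExp hmL hprod_int hGL).symm
        _ = ∫ x in L ⁻¹' G, (μ[(Z ⁻¹' s ∩ U ⁻¹' F).indicator (fun _ => (1:ℝ)) | mV L]) x ∂μ := by
            refine setIntegral_congr_ae (hmL _ hGL) ?_
            filter_upwards [hpull, hCI] with ω h1 h2 _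
            rw [h1, h2, mul_comm]
        _ = ∫ x in L ⁻¹' G, ((Z ⁻¹' s ∩ U ⁻¹' F).indicator (fun _ => (1 : ℝ))) x ∂μ :=
            setIntegral_condExp hmL ((integrable_const (1 : ℝ)).indicator
              ((hZ hs).inter (hU hF))) hGL
        _ = ∫ x in Z ⁻¹' s ∩ L ⁻¹' G, ind x ∂μ := hR1.symm
    · -- complement
      intro t ht hint
      have ht' : MeasurableSet t := hmW _ ht
      have h1 := integral_add_compl ht' heF_int
      have h2 := integral_add_compl ht' hind_int
      rw [← h_univ] at h2
      linarith
    · -- disjoint union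
      intro f hdisj hmeas hind
      have hm' : ∀ i, MeasurableSet (f i) := fun i => hmW _ (hmeas i)
      rw [integral_iUnion hm' hdisj heF_int.integrableOn,
        integral_iUnion hm' hdisj hind_int.integrableOn]
      exact tsum_congr hind
  exact (ae_eq_condExp_of_forall_setIntegral_eq hmW hind_int
    (fun s _ _ => heF_int.integrableOn)
    (fun s hs _ => key s hs)
    (((stronglyMeasurable_condExp (m := mV L) (μ := μ) (f := ind)).mono (le_sup_right : mV L ≤ mV Z ⊔ mV L)).aestronglyMeasurable)).symm

/-- Swap `1_{U ∈ F}` for `P(U ∈ F | L)` in integrals against `σ(Z,L)`-measurable functions. -/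
lemma integral_mul_indicator_eq [StandardBorelSpace Ω] (μ : Measure Ω)
    [IsProbabilityMeasure μ]
    {Z U L : Ω → ℝ} (hZ : Measurable Z) (hU : Measurable U) (hL : Measurable L)
    (hZU : CondIndepFun (mV L) (measurable_iff_comap_le.mp hL) Z U μ)
    {F : Set ℝ} (hF : MeasurableSet F)
    {φ : Ω → ℝ} (hφm : StronglyMeasurable[mV Z ⊔ mV L] φ) (hφi : Integrable φ μ) :
    ∫ ω, φ ω * (U ⁻¹' F).indicator (fun _ => (1 : ℝ)) ω ∂μ
      = ∫ ω, φ ω * (μ[(U ⁻¹' F).indicator (fun _ => (1 : ℝ)) | mV L]) ω ∂μ := by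
  have hmL : mV L ≤ mΩ := measurable_iff_comap_le.mp hL
  have hmZ : mV Z ≤ mΩ := measurable_iff_comap_le.mp hZ
  have hmW : mV Z ⊔ mV L ≤ mΩ := sup_le hmZ hmL
  set ind : Ω → ℝ := (U ⁻¹' F).indicator (fun _ => (1 : ℝ)) with hind_def
  have hind_int : Integrable ind μ := (integrable_const (1 : ℝ)).indicator (hU hF)
  have hind_bdd : ∀ᵐ ω ∂μ, ‖ind ω‖ ≤ 1 := by
    refine ae_of_all _ fun ω => ?_
    by_cases h : ω ∈ U ⁻¹' F <;> simp [ind, Set.indicator, h]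
  have hprod_int : Integrable (fun ω => ind ω * φ ω) μ :=
    hφi.bdd_mul hind_int.aestronglyMeasurable hind_bdd
  have hprod_int' : Integrable (fun ω => φ ω * ind ω) μ :=
    hprod_int.congr (ae_of_all _ fun ω => mul_comm _ _)
  have hpull : μ[(fun ω => φ ω * ind ω) | mV Z ⊔ mV L]
      =ᵐ[μ] fun ω => φ ω * (μ[ind | mV Z ⊔ mV L]) ω := by
    have h := condExp_mul_of_stronglyMeasurable_left (m := mV Z ⊔ mV L) (μ := μ)
      (f := φ) (g := ind) hφm (by simpa [Pi.mul_def] using hprod_int') hind_int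
    simpa [Pi.mul_def] using h
  have hkey := condexp_indicator_sup_comap μ hZ hU hL hZU hF
  calc ∫ ω, φ ω * ind ω ∂μ
      = ∫ ω, (μ[(fun ω => φ ω * ind ω) | mV Z ⊔ mV L]) ω ∂μ :=
        (integral_condExp hmW).symm
    _ = ∫ ω, φ ω * (μ[ind | mV L]) ω ∂μ := by
        refine integral_congr_ae ?_
        filter_upwards [hpull, hkey] with ω h1 h2
        rw [h1, h2]

end Aux

/-- (Discretization preserves the AIV structure.) Let `S₁,…,S_M` be a
finite measurable partition of the range of `Z` (cells of positive probability) and let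
`Z_S` be the cell index of `Z`. If `Z ⊥ U | L` and `P(A=a|Z,U,L) = b(U,L) + c(Z,L)`, then
`P(A=a | Z_S, U, L) = b(U,L) + c̃(Z_S, L)` with `c̃(Z_S,L) = E[c(Z,L) | Z_S, L]`; i.e.
`Z_S` is an additive IV for `A = a`. -/
theorem stmt16 {Ω : Type*} [mΩ : MeasurableSpace Ω] [StandardBorelSpace Ω]
    (μ : Measure Ω) [IsProbabilityMeasure μ]
    (A Z U L : Ω → ℝ) (a : ℝ)
    (hA : Measurable A) (hZ : Measurable Z) (hU : Measurable U) (hL : Measurable L)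
    (B : Ω → ℝ) (hB : B = fun ω => if A ω = a then (1 : ℝ) else 0)
    (M : ℕ) (hM : 0 < M)
    (S : Fin M → Set ℝ) (hSmeas : ∀ m, MeasurableSet (S m))
    (hSdisj : ∀ m m', m ≠ m' → Disjoint (S m) (S m'))
    (ZS : Ω → Fin M) (hZS : Measurable ZS)
    (hmem : ∀ ω, Z ω ∈ S (ZS ω))
    (hpos : ∀ m, 0 < μ {ω | ZS ω = m})
    -- IV independence: `Z ⊥ U | L`
    (hZU : CondIndepFun (mV L) (measurable_iff_comap_le.mp hL) Z U μ)
    -- additive IV: `P(A=a | Z,U,L) = b(U,L) + c(Z,L)`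
    (b c : ℝ → ℝ → ℝ)
    (hb : Measurable fun p : ℝ × ℝ => b p.1 p.2)
    (hc : Measurable fun p : ℝ × ℝ => c p.1 p.2)
    (hintc : Integrable (fun ω => c (Z ω) (L ω)) μ)
    (hAIV : μ[B | mV Z ⊔ mV U ⊔ mV L]
      =ᵐ[μ] fun ω => b (U ω) (L ω) + c (Z ω) (L ω)) :
    μ[B | mV ZS ⊔ mV U ⊔ mV L]
      =ᵐ[μ] fun ω =>
        b (U ω) (L ω) + (μ[fun ω' => c (Z ω') (L ω') | mV ZS ⊔ mV L]) ω := by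
  have hmL : mV L ≤ mΩ := measurable_iff_comap_le.mp hL
  have hmZ : mV Z ≤ mΩ := measurable_iff_comap_le.mp hZ
  have hmU : mV U ≤ mΩ := measurable_iff_comap_le.mp hU
  have hmZS : mV ZS ≤ mΩ := measurable_iff_comap_le.mp hZS
  -- `ZS` is determined by `Z`
  have hZSeq : ∀ ω (m : Fin M), ZS ω = m ↔ Z ω ∈ S m := by
    intro ω m
    constructor
    · rintro rfl; exact hmem ω
    · intro h
      by_contra hne
      exact (hSdisj _ _ hne).le_bot ⟨hmem ω, h⟩ |>.elim
  have hZS_meas_Z : Measurable[mV Z] ZS := by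
    intro E _
    refine ⟨⋃ m ∈ E, S m, MeasurableSet.biUnion E.to_countable (fun m _ => hSmeas m), ?_⟩
    ext ω
    simp only [Set.mem_preimage, Set.mem_iUnion]
    constructor
    · rintro ⟨m, hm, hω⟩
      exact ((hZSeq ω m).mpr hω) ▸ hm
    · intro h
      exact ⟨ZS ω, h, hmem ω⟩
  have hZS_le : mV ZS ≤ mV Z := measurable_iff_comap_le.mp hZS_meas_Z
  -- σ-algebras
  have hm1 : (mV Z ⊔ mV U ⊔ mV L) ≤ mΩ := sup_le (sup_le hmZ hmU) hmL
  have hm2 : (mV ZS ⊔ mV U ⊔ mV L) ≤ mΩ := sup_le (sup_le hmZS hmU) hmL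
  have hmW' : (mV Z ⊔ mV L) ≤ mΩ := sup_le hmZ hmL
  have hmSL : (mV ZS ⊔ mV L) ≤ mΩ := sup_le hmZS hmL
  have hm21 : (mV ZS ⊔ mV U ⊔ mV L) ≤ (mV Z ⊔ mV U ⊔ mV L) := sup_le_sup_right (sup_le_sup_right hZS_le _) _
  have hSLW : (mV ZS ⊔ mV L) ≤ (mV Z ⊔ mV L) := sup_le_sup_right hZS_le _
  have hSL2 : (mV ZS ⊔ mV L) ≤ (mV ZS ⊔ mV U ⊔ mV L) := sup_le (le_sup_left.trans le_sup_left) le_sup_right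
  -- the functions
  set cZL : Ω → ℝ := fun ω => c (Z ω) (L ω) with hcZL_def
  set bUL : Ω → ℝ := fun ω => b (U ω) (L ω) with hbUL_def
  set g : Ω → ℝ := μ[cZL | (mV ZS ⊔ mV L)] with hg_def
  have hg_int : Integrable g μ := integrable_condExp
  have hcZL_mW : Measurable[(mV Z ⊔ mV L)] cZL := by
    have hZW : Measurable[(mV Z ⊔ mV L)] Z := measurable_iff_comap_le.mpr le_sup_left
    have hLW : Measurable[(mV Z ⊔ mV L)] L := measurable_iff_comap_le.mpr le_sup_right
    exact hc.comp (hZW.prodMk hLW)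
  -- bUL is integrable
  have hbUL_int : Integrable bUL μ := by
    refine ((integrable_condExp (f := B) (m := (mV Z ⊔ mV U ⊔ mV L)) (μ := μ)).sub hintc).congr ?_
    filter_upwards [hAIV] with ω h
    simp only [Pi.sub_apply, h]
    ring
  -- bUL is (mV ZS ⊔ mV U ⊔ mV L)-strongly measurable
  have hbUL_m2 : StronglyMeasurable[(mV ZS ⊔ mV U ⊔ mV L)] bUL := by
    have hU2 : Measurable[(mV ZS ⊔ mV U ⊔ mV L)] U :=
      measurable_iff_comap_le.mpr (le_sup_right.trans le_sup_left)
    have hL2 : Measurable[(mV ZS ⊔ mV U ⊔ mV L)] L := measurable_iff_comap_le.mpr le_sup_right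
    exact (hb.comp (hU2.prodMk hL2)).stronglyMeasurable
  -- Step 4: μ[cZL | (mV ZS ⊔ mV U ⊔ mV L)] =ᵐ g, via set integrals
  have step4 : g =ᵐ[μ] μ[cZL | (mV ZS ⊔ mV U ⊔ mV L)] := by
    -- π-system for (mV ZS ⊔ mV U ⊔ mV L)
    set C : Set (Set Ω) := {t | ∃ (E : Set (Fin M)) (F G : Set ℝ),
      MeasurableSet F ∧ MeasurableSet G ∧ t = ZS ⁻¹' E ∩ U ⁻¹' F ∩ L ⁻¹' G} with hC_def
    have h_eq : (mV ZS ⊔ mV U ⊔ mV L) = MeasurableSpace.generateFrom C := by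
      refine le_antisymm (sup_le (sup_le ?_ ?_) ?_) (MeasurableSpace.generateFrom_le ?_)
      · rintro t ⟨E, _, rfl⟩
        exact MeasurableSpace.measurableSet_generateFrom
          ⟨E, Set.univ, Set.univ, MeasurableSet.univ, MeasurableSet.univ, by simp⟩
      · rintro t ⟨F, hF, rfl⟩
        exact MeasurableSpace.measurableSet_generateFrom
          ⟨Set.univ, F, Set.univ, hF, MeasurableSet.univ, by simp⟩
      · rintro t ⟨G, hG, rfl⟩
        exact MeasurableSpace.measurableSet_generateFrom
          ⟨Set.univ, Set.univ, G, MeasurableSet.univ, hG, by simp⟩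
      · rintro t ⟨E, F, G, hF, hG, rfl⟩
        refine MeasurableSet.inter (MeasurableSet.inter ?_ ?_) ?_
        · exact (le_sup_left.trans le_sup_left : mV ZS ≤ mV ZS ⊔ mV U ⊔ mV L) _
            ⟨E, trivial, rfl⟩
        · exact (le_sup_right.trans le_sup_left : mV U ≤ mV ZS ⊔ mV U ⊔ mV L) _ ⟨F, hF, rfl⟩
        · exact (le_sup_right : mV L ≤ mV ZS ⊔ mV U ⊔ mV L) _ ⟨G, hG, rfl⟩
    have h_pi : IsPiSystem C := by
      rintro t ⟨E, F, G, hF, hG, rfl⟩ t' ⟨E', F', G', hF', hG', rfl⟩ _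
      refine ⟨E ∩ E', F ∩ F', G ∩ G', hF.inter hF', hG.inter hG', ?_⟩
      ext ω
      simp only [Set.mem_inter_iff, Set.mem_preimage]
      tauto
    have h_univ : ∫ x, g x ∂μ = ∫ x, cZL x ∂μ := integral_condExp hmSL
    have key : ∀ t, MeasurableSet[(mV ZS ⊔ mV U ⊔ mV L)] t → ∫ x in t, g x ∂μ = ∫ x in t, cZL x ∂μ := by
      intro t ht
      refine MeasurableSpace.induction_on_inter (m := (mV ZS ⊔ mV U ⊔ mV L))
        (C := fun t _ => ∫ x in t, g x ∂μ = ∫ x in t, cZL x ∂μ) h_eq h_pi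
        (by simp) ?_ ?_ ?_ t ht
      · -- basic case
        rintro t ⟨E, F, G, hF, hG, rfl⟩
        set D : Set Ω := ZS ⁻¹' E ∩ L ⁻¹' G with hD_def
        have htD : ZS ⁻¹' E ∩ U ⁻¹' F ∩ L ⁻¹' G = D ∩ U ⁻¹' F := by
          ext ω; simp only [Set.mem_inter_iff, Set.mem_preimage, D]; tauto
        have hD_SL : MeasurableSet[(mV ZS ⊔ mV L)] D :=
          MeasurableSet.inter ((le_sup_left : mV ZS ≤ (mV ZS ⊔ mV L)) _ ⟨E, trivial, rfl⟩)
            ((le_sup_right : mV L ≤ (mV ZS ⊔ mV L)) _ ⟨G, hG, rfl⟩)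
        have hD_W : MeasurableSet[(mV Z ⊔ mV L)] D := hSLW _ hD_SL
        have hD : MeasurableSet D := hmSL _ hD_SL
        set ind : Ω → ℝ := (U ⁻¹' F).indicator (fun _ => (1 : ℝ)) with hind_def
        set eF : Ω → ℝ := μ[ind | mV L] with heF_def
        have hind_int : Integrable ind μ := (integrable_const (1 : ℝ)).indicator (hU hF)
        have heF_int : Integrable eF μ := integrable_condExp
        have heF_bdd : ∀ᵐ ω ∂μ, ‖eF ω‖ ≤ 1 := by
          have h0 : 0 ≤ᵐ[μ] eF :=
            condExp_nonneg (ae_of_all _ fun ω => Set.indicator_nonneg (fun _ _ => zero_le_one) ω)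
          have h1 : eF ≤ᵐ[μ] μ[(fun _ => (1 : ℝ)) | mV L] := by
            refine condExp_mono hind_int (integrable_const _) (ae_of_all _ fun ω => ?_)
            by_cases h : ω ∈ U ⁻¹' F <;> simp [ind, Set.indicator, h]
          have h2 : μ[(fun _ => (1 : ℝ)) | mV L] = fun _ => (1 : ℝ) := condExp_const hmL _
          rw [h2] at h1
          filter_upwards [h0, h1] with ω h0 h1
          simp only [Pi.zero_apply] at h0
          rw [Real.norm_eq_abs, abs_le]
          exact ⟨by linarith, h1⟩
        set φ : Ω → ℝ := D.indicator cZL with hφ_def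
        set φ' : Ω → ℝ := D.indicator g with hφ'_def
        have hφ_mW : StronglyMeasurable[(mV Z ⊔ mV L)] φ :=
          (hcZL_mW.stronglyMeasurable).indicator hD_W
        have hφ_int : Integrable φ μ := hintc.indicator hD
        have hφ'_mSL : StronglyMeasurable[(mV ZS ⊔ mV L)] φ' :=
          stronglyMeasurable_condExp.indicator hD_SL
        have hφ'_mW : StronglyMeasurable[(mV Z ⊔ mV L)] φ' := hφ'_mSL.mono hSLW
        have hφ'_int : Integrable φ' μ := hg_int.indicator hD
        -- set integrals as products with `ind`
        have hrewrite : ∀ ψ : Ω → ℝ,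
            ∫ x in D ∩ U ⁻¹' F, ψ x ∂μ = ∫ ω, D.indicator ψ ω * ind ω ∂μ := by
          intro ψ
          rw [Set.inter_comm, ← setIntegral_indicator hD, ← integral_indicator (hU hF)]
          congr 1
          funext ω
          by_cases h : ω ∈ U ⁻¹' F <;> by_cases h' : ω ∈ D <;>
            simp [ind, Set.indicator, h, h']
        -- swap `ind` for `eF` using Lemma A
        have hswapφ := integral_mul_indicator_eq μ hZ hU hL hZU hF hφ_mW hφ_int
        have hswapφ' := integral_mul_indicator_eq μ hZ hU hL hZU hF hφ'_mW hφ'_int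
        -- ∫ φ eF = ∫ φ' eF
        have hmid : ∫ ω, φ ω * eF ω ∂μ = ∫ ω, φ' ω * eF ω ∂μ := by
          have hprodφ : Integrable (fun ω => eF ω * φ ω) μ :=
            hφ_int.bdd_mul heF_int.aestronglyMeasurable heF_bdd
          have hpull : μ[(fun ω => eF ω * φ ω) | (mV ZS ⊔ mV L)]
              =ᵐ[μ] fun ω => eF ω * (μ[φ | (mV ZS ⊔ mV L)]) ω := by
            have h := condExp_mul_of_stronglyMeasurable_left (m := (mV ZS ⊔ mV L)) (μ := μ)
              (f := eF) (g := φ) (stronglyMeasurable_condExp.mono le_sup_right)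
              (by simpa [Pi.mul_def] using hprodφ) hφ_int
            simpa [Pi.mul_def] using h
          have hcond_φ : μ[φ | (mV ZS ⊔ mV L)] =ᵐ[μ] φ' := by
            have h := condExp_indicator (m := (mV ZS ⊔ mV L)) (μ := μ) hintc hD_SL
            simpa [hφ_def, hφ'_def, hg_def] using h
          calc ∫ ω, φ ω * eF ω ∂μ
              = ∫ ω, eF ω * φ ω ∂μ := by congr 1; funext ω; ring
            _ = ∫ ω, (μ[(fun ω => eF ω * φ ω) | (mV ZS ⊔ mV L)]) ω ∂μ := (integral_condExp hmSL).symm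
            _ = ∫ ω, eF ω * φ' ω ∂μ := by
                refine integral_congr_ae ?_
                filter_upwards [hpull, hcond_φ] with ω h1 h2
                rw [h1, h2]
            _ = ∫ ω, φ' ω * eF ω ∂μ := by congr 1; funext ω; ring
        calc ∫ x in ZS ⁻¹' E ∩ U ⁻¹' F ∩ L ⁻¹' G, g x ∂μ
            = ∫ ω, φ' ω * ind ω ∂μ := by rw [htD]; exact hrewrite g
          _ = ∫ ω, φ' ω * eF ω ∂μ := hswapφ'
          _ = ∫ ω, φ ω * eF ω ∂μ := hmid.symm
          _ = ∫ ω, φ ω * ind ω ∂μ := hswapφ.symm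
          _ = ∫ x in ZS ⁻¹' E ∩ U ⁻¹' F ∩ L ⁻¹' G, cZL x ∂μ := by
              rw [htD]; exact (hrewrite cZL).symm
      · -- complement
        intro t ht hint
        have ht' : MeasurableSet t := hm2 _ ht
        have h1 := integral_add_compl ht' hg_int
        have h2 := integral_add_compl ht' hintc
        rw [← h_univ] at h2
        linarith
      · -- disjoint union
        intro f hdisj hmeas hind
        have hm' : ∀ i, MeasurableSet (f i) := fun i => hm2 _ (hmeas i)
        rw [integral_iUnion hm' hdisj hg_int.integrableOn,
          integral_iUnion hm' hdisj hintc.integrableOn]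
        exact tsum_congr hind
    exact ae_eq_condExp_of_forall_setIntegral_eq hm2 hintc
      (fun s _ _ => hg_int.integrableOn)
      (fun s hs _ => key s hs)
      ((stronglyMeasurable_condExp.mono hSL2).aestronglyMeasurable)
  -- Assemble
  have h1 : μ[B | (mV ZS ⊔ mV U ⊔ mV L)] =ᵐ[μ] μ[μ[B | (mV Z ⊔ mV U ⊔ mV L)] | (mV ZS ⊔ mV U ⊔ mV L)] := (condExp_condExp_of_le hm21 hm1).symm
  have h2 : μ[μ[B | (mV Z ⊔ mV U ⊔ mV L)] | (mV ZS ⊔ mV U ⊔ mV L)] =ᵐ[μ] μ[(fun ω => bUL ω + cZL ω) | (mV ZS ⊔ mV U ⊔ mV L)] := condExp_congr_ae hAIV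
  have h3 : μ[(fun ω => bUL ω + cZL ω) | (mV ZS ⊔ mV U ⊔ mV L)] =ᵐ[μ] μ[bUL | (mV ZS ⊔ mV U ⊔ mV L)] + μ[cZL | (mV ZS ⊔ mV U ⊔ mV L)] := by
    have := condExp_add (m := (mV ZS ⊔ mV U ⊔ mV L)) (μ := μ) hbUL_int hintc
    exact this
  have h4 : μ[bUL | (mV ZS ⊔ mV U ⊔ mV L)] = bUL := condExp_of_stronglyMeasurable hm2 hbUL_m2 hbUL_int
  filter_upwards [h1, h2, h3, step4] with ω e1 e2 e3 e4
  rw [e1, e2, e3]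
  simp only [Pi.add_apply, h4]
  rw [← e4]
end
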